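/- arXiv:1205.4802 — 10 statements merged into one kernel-verified Lean document; each statement's English description precedes it below -/
import Mathlib

section
/- Let A be a finite alphabet and k ≥ 1. The quotient monoid A*/~_k of the free monoid A* by the congruence ~_k is J-trivial. -/
/-- A monoid is `J`-trivial if equality of the two-sided ideals generated by
two elements implies equality of the elements. -/
def JTrivial (M : Type) [Monoid M] : Prop :=
  ∀ s t : M, {x : M | ∃ a b : M, a * s * b = x} = {x : M | ∃ a b : M, a * t * b = x} → s = t

/-- Two words have exactly the same subwords (scattered subsequences) of length
at most `k`. -/
def SameSubwords {A : Type} (k : ℕ) (w w' : List A) : Prop :=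
  ∀ v : List A, v.length ≤ k → (v.Sublist w ↔ v.Sublist w')

/-- A word is a subword of any word extending it on both sides. -/
lemma sublist_of_middle {A : Type} {v w : List A} (x y : List A) (h : v.Sublist w) :
    v.Sublist (x ++ w ++ y) :=
  h.trans ((List.sublist_append_right x w).trans (List.sublist_append_left (x ++ w) y))

/-- For a finite alphabet `A` and `k ≥ 1`, the quotient monoid `A*/~_k` is
`J`-trivial. -/
theorem sameSubwords_quotient_JTrivial (A : Type) [Fintype A] (k : ℕ) (hk : 1 ≤ k)
    (c : Con (FreeMonoid A))
    (hc : ∀ x y : FreeMonoid A,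
      c x y ↔ SameSubwords k (FreeMonoid.toList x) (FreeMonoid.toList y)) :
    JTrivial c.Quotient := by
  intro s t h
  obtain ⟨ws, rfl⟩ := Con.mk'_surjective s
  obtain ⟨wt, rfl⟩ := Con.mk'_surjective t
  have h1 : (c.mk' ws) ∈ {x : c.Quotient | ∃ a b, a * c.mk' wt * b = x} := by
    rw [← h]; exact ⟨1, 1, by simp⟩
  have h2 : (c.mk' wt) ∈ {x : c.Quotient | ∃ a b, a * c.mk' ws * b = x} := by
    rw [h]; exact ⟨1, 1, by simp⟩
  obtain ⟨a, b, hab⟩ := h1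
  obtain ⟨a', b', hab'⟩ := h2
  obtain ⟨wa, rfl⟩ := Con.mk'_surjective a
  obtain ⟨wb, rfl⟩ := Con.mk'_surjective b
  obtain ⟨wa', rfl⟩ := Con.mk'_surjective a'
  obtain ⟨wb', rfl⟩ := Con.mk'_surjective b'
  have e1 : c (wa * wt * wb) ws := by
    have := hab
    simp only [← map_mul] at this
    exact c.eq.mp this
  have e2 : c (wa' * ws * wb') wt := by
    have := hab'
    simp only [← map_mul] at this
    exact c.eq.mp this
  have s1 := (hc _ _).mp e1
  have s2 := (hc _ _).mp e2
  have hlists1 : FreeMonoid.toList (wa * wt * wb)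
      = FreeMonoid.toList wa ++ FreeMonoid.toList wt ++ FreeMonoid.toList wb := by
    simp [FreeMonoid.toList_mul]
  have hlists2 : FreeMonoid.toList (wa' * ws * wb')
      = FreeMonoid.toList wa' ++ FreeMonoid.toList ws ++ FreeMonoid.toList wb' := by
    simp [FreeMonoid.toList_mul]
  refine c.eq.mpr ?_
  rw [hc]
  intro v hv
  constructor
  · intro hvs
    have := (s2 v hv).mp (by rw [hlists2]; exact sublist_of_middle _ _ hvs)
    exact this
  · intro hvt
    exact (s1 v hv).mp (by rw [hlists1]; exact sublist_of_middle _ _ hvt)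
end

section
/- For a finite monoid M, the following are equivalent: (i) M is J-trivial; (ii) for all x, y ∈ M, (xy)^ω = (yx)^ω and x·x^ω = x^ω; (iii) for all x, y ∈ M, (xy)^ω·x = (xy)^ω and y·(xy)^ω = (xy)^ω. -/
/-- The ω-power of an element of a finite monoid: `m ^ (card M)!`, which is
the unique idempotent among the positive powers of `m`. -/
def omegaPow {M : Type} [Monoid M] [Fintype M] (m : M) : M :=
  m ^ (Fintype.card M).factorial

section Aux
variable {M : Type} [Monoid M] [Fintype M]

omit [Fintype M] in
lemma mul_pow_swap (x y : M) (k : ℕ) : (x * y) ^ k * x = x * (y * x) ^ k := by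
  induction k with
  | zero => simp
  | succ k ih =>
    rw [pow_succ', mul_assoc, ih, pow_succ', ← mul_assoc, ← mul_assoc, mul_assoc x y x]

lemma omegaPow_idem (m : M) : omegaPow m * omegaPow m = omegaPow m := by
  have key : ∃ i p, 0 < p ∧ p ≤ Fintype.card M ∧ i ≤ Fintype.card M ∧ m ^ (i + p) = m ^ i := by
    obtain ⟨a, b, hne, hab⟩ := Fintype.exists_ne_map_eq_of_card_lt
      (fun k : Fin (Fintype.card M + 1) => m ^ (k : ℕ)) (by simp)
    have hne' : (a : ℕ) ≠ b := fun h => hne (Fin.ext h)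
    have ha := a.isLt
    have hb := b.isLt
    rcases Nat.lt_or_ge (a : ℕ) b with h | h
    · exact ⟨a, b - a, by omega, by omega, by omega, by
        rw [show (a : ℕ) + ((b : ℕ) - a) = b by omega]; exact hab.symm⟩
    · exact ⟨b, a - b, by omega, by omega, by omega, by
        rw [show (b : ℕ) + ((a : ℕ) - b) = a by omega]; exact hab⟩
  obtain ⟨i, p, hp, hpc, hic, heq⟩ := key
  have hpN : p ∣ (Fintype.card M).factorial := Nat.dvd_factorial hp hpc
  have hiN : i ≤ (Fintype.card M).factorial := le_trans hic (Nat.self_le_factorial _)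
  have step : ∀ k, i ≤ k → m ^ (k + p) = m ^ k := by
    intro k hk
    obtain ⟨r, rfl⟩ := Nat.exists_eq_add_of_le hk
    rw [show i + r + p = (i + p) + r by omega, pow_add, heq, ← pow_add]
  have main : ∀ t, m ^ ((Fintype.card M).factorial + t * p) = m ^ (Fintype.card M).factorial := by
    intro t; induction t with
    | zero => simp
    | succ t ih =>
      rw [show (Fintype.card M).factorial + (t + 1) * p
          = ((Fintype.card M).factorial + t * p) + p by ring,
        step _ (by omega), ih]
  have h2 : m ^ ((Fintype.card M).factorial + (Fintype.card M).factorial)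
      = m ^ (Fintype.card M).factorial := by
    have := main ((Fintype.card M).factorial / p)
    rwa [Nat.div_mul_cancel hpN] at this
  show m ^ (Fintype.card M).factorial * m ^ (Fintype.card M).factorial = _
  rw [← pow_add, h2]; rfl

lemma pow_pred_mul (m : M) : m ^ ((Fintype.card M).factorial - 1) * m = omegaPow m := by
  rw [← pow_succ, Nat.sub_add_cancel (Nat.factorial_pos _)]; rfl

omit [Fintype M] in
lemma jt_eq (h : JTrivial M) (s t : M) (h1 : ∃ a b, a * t * b = s)
    (h2 : ∃ a b, a * s * b = t) : s = t := by
  apply h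
  obtain ⟨a, b, hab⟩ := h1
  obtain ⟨c, d, hcd⟩ := h2
  ext z
  simp only [Set.mem_setOf_eq]
  constructor
  · rintro ⟨u, v, rfl⟩
    exact ⟨u * a, b * v, by rw [← hab]; simp [mul_assoc]⟩
  · rintro ⟨u, v, rfl⟩
    exact ⟨u * c, d * v, by rw [← hcd]; simp [mul_assoc]⟩

lemma sandwich (x y : M) :
    x * omegaPow (y * x) * (y * (x * y) ^ ((Fintype.card M).factorial - 1))
      = omegaPow (x * y) := by
  show x * (y * x) ^ (Fintype.card M).factorial * _ = _
  rw [← mul_pow_swap x y, mul_assoc ((x * y) ^ (Fintype.card M).factorial) x,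
    ← mul_assoc x y, ← pow_succ', Nat.sub_add_cancel (Nat.factorial_pos _)]
  exact omegaPow_idem (x * y)

lemma jt_to_p2 (h : JTrivial M) (x y : M) :
    omegaPow (x * y) = omegaPow (y * x) ∧ x * omegaPow x = omegaPow x := by
  constructor
  · exact jt_eq h _ _ ⟨x, y * (x * y) ^ ((Fintype.card M).factorial - 1), sandwich x y⟩
      ⟨y, x * (y * x) ^ ((Fintype.card M).factorial - 1), sandwich y x⟩
  · refine jt_eq h _ _ ⟨x, 1, by rw [mul_one]⟩
      ⟨x ^ ((Fintype.card M).factorial - 1), 1, ?_⟩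
    rw [mul_one, ← mul_assoc, pow_pred_mul]
    exact omegaPow_idem x

lemma jt_to_p3 (h : JTrivial M) (x y : M) :
    omegaPow (x * y) * x = omegaPow (x * y) ∧
      y * omegaPow (x * y) = omegaPow (x * y) := by
  constructor
  · refine jt_eq h _ _ ⟨1, x, by rw [one_mul]⟩
      ⟨1, y * (x * y) ^ ((Fintype.card M).factorial - 1), ?_⟩
    rw [one_mul, mul_assoc, ← mul_assoc x y, ← pow_succ',
      Nat.sub_add_cancel (Nat.factorial_pos _)]
    exact omegaPow_idem (x * y)
  · refine jt_eq h _ _ ⟨y, 1, by rw [mul_one]⟩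
      ⟨(x * y) ^ ((Fintype.card M).factorial - 1) * x, 1, ?_⟩
    rw [mul_one, mul_assoc ((x * y) ^ ((Fintype.card M).factorial - 1)) x,
      ← mul_assoc x y, ← mul_assoc, ← pow_succ, Nat.sub_add_cancel (Nat.factorial_pos _)]
    exact omegaPow_idem (x * y)

lemma p3_to_jt
    (h : ∀ x y : M, omegaPow (x * y) * x = omegaPow (x * y) ∧
      y * omegaPow (x * y) = omegaPow (x * y)) : JTrivial M := by
  intro s t hset
  have hs : s ∈ {x : M | ∃ a b, a * t * b = x} := by
    rw [← hset]; exact ⟨1, 1, by rw [one_mul, mul_one]⟩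
  have ht : t ∈ {x : M | ∃ a b, a * s * b = x} := by
    rw [hset]; exact ⟨1, 1, by rw [one_mul, mul_one]⟩
  obtain ⟨a, b, hab⟩ := hs
  obtain ⟨c, d, hcd⟩ := ht
  have key : ∀ k, (a * c) ^ k * s * (d * b) ^ k = s := by
    intro k; induction k with
    | zero => simp
    | succ k ih =>
      calc (a * c) ^ (k + 1) * s * (d * b) ^ (k + 1)
          = (a * c) * ((a * c) ^ k * s * (d * b) ^ k) * (d * b) := by
            rw [pow_succ' (a * c), pow_succ (d * b)]; simp [mul_assoc]
        _ = (a * c) * s * (d * b) := by rw [ih]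
        _ = a * (c * s * d) * b := by simp [mul_assoc]
        _ = s := by rw [hcd, hab]
  have hs2 : omegaPow (a * c) * s * omegaPow (d * b) = s := key _
  have h1 : c * omegaPow (a * c) = omegaPow (a * c) := (h a c).2
  have h2 : omegaPow (d * b) * d = omegaPow (d * b) := (h d b).1
  have hts : t = s := by
    calc t = c * s * d := hcd.symm
      _ = c * (omegaPow (a * c) * s * omegaPow (d * b)) * d := by rw [hs2]
      _ = (c * omegaPow (a * c)) * s * (omegaPow (d * b) * d) := by simp [mul_assoc]
      _ = omegaPow (a * c) * s * omegaPow (d * b) := by rw [h1, h2]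
      _ = s := hs2
  exact hts.symm

lemma unit_trick (e z w : M) (hzw : z * w = e) (hze : z * e = z) (hew : e * w = w)
    (haperz : z * omegaPow z = omegaPow z) : z = e := by
  have key : ∀ k, z ^ k * e * w ^ k = e := by
    intro k; induction k with
    | zero => simp
    | succ k ih =>
      calc z ^ (k + 1) * e * w ^ (k + 1)
          = z * (z ^ k * e * w ^ k) * w := by
            rw [pow_succ' z, pow_succ w]; simp [mul_assoc]
        _ = z * e * w := by rw [ih]
        _ = z * w := by rw [hze]
        _ = e := hzw
  have h1 : z ^ ((Fintype.card M).factorial + 1) * e * w ^ (Fintype.card M).factorial = z := by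
    rw [pow_succ']
    calc z * z ^ (Fintype.card M).factorial * e * w ^ (Fintype.card M).factorial
        = z * (z ^ (Fintype.card M).factorial * e * w ^ (Fintype.card M).factorial) := by
          simp [mul_assoc]
      _ = z * e := by rw [key]
      _ = z := hze
  have h2 : z ^ ((Fintype.card M).factorial + 1) = z ^ (Fintype.card M).factorial := by
    rw [pow_succ']; exact haperz
  rw [h2, key] at h1
  exact h1.symm

lemma p2_to_p3
    (h : ∀ x y : M, omegaPow (x * y) = omegaPow (y * x) ∧ x * omegaPow x = omegaPow x)
    (x y : M) :
    omegaPow (x * y) * x = omegaPow (x * y) ∧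
      y * omegaPow (x * y) = omegaPow (x * y) := by
  have haper : ∀ m : M, m * omegaPow m = omegaPow m := fun m => (h m m).2
  have hswap : omegaPow (x * y) = omegaPow (y * x) := (h x y).1
  have hee : omegaPow (x * y) * omegaPow (x * y) = omegaPow (x * y) := omegaPow_idem _
  have hex : omegaPow (x * y) * x = x * omegaPow (x * y) := by
    calc omegaPow (x * y) * x = x * omegaPow (y * x) :=
          mul_pow_swap x y ((Fintype.card M).factorial)
      _ = x * omegaPow (x * y) := by rw [← hswap]
  have hye : y * omegaPow (x * y) = omegaPow (x * y) * y := by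
    calc y * omegaPow (x * y) = omegaPow (y * x) * y :=
          (mul_pow_swap y x ((Fintype.card M).factorial)).symm
      _ = omegaPow (x * y) * y := by rw [← hswap]
  have hze : (x * omegaPow (x * y)) * omegaPow (x * y) = x * omegaPow (x * y) := by
    rw [mul_assoc, hee]
  have hwe : (y * omegaPow (x * y)) * omegaPow (x * y) = y * omegaPow (x * y) := by
    rw [mul_assoc, hee]
  have hew : omegaPow (x * y) * (y * omegaPow (x * y)) = y * omegaPow (x * y) := by
    rw [← mul_assoc, ← hye, mul_assoc, hee]
  have hez : omegaPow (x * y) * (x * omegaPow (x * y)) = x * omegaPow (x * y) := by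
    rw [← mul_assoc, hex, mul_assoc, hee]
  have hzw : (x * omegaPow (x * y)) * (y * omegaPow (x * y)) = omegaPow (x * y) := by
    calc (x * omegaPow (x * y)) * (y * omegaPow (x * y))
        = x * (omegaPow (x * y) * y) * omegaPow (x * y) := by simp [mul_assoc]
      _ = x * (y * omegaPow (x * y)) * omegaPow (x * y) := by rw [← hye]
      _ = (x * y) * (omegaPow (x * y) * omegaPow (x * y)) := by simp [mul_assoc]
      _ = (x * y) * omegaPow (x * y) := by rw [hee]
      _ = omegaPow (x * y) := haper (x * y)
  have hwz : (y * omegaPow (x * y)) * (x * omegaPow (x * y)) = omegaPow (x * y) := by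
    calc (y * omegaPow (x * y)) * (x * omegaPow (x * y))
        = y * (omegaPow (x * y) * x) * omegaPow (x * y) := by simp [mul_assoc]
      _ = y * (x * omegaPow (x * y)) * omegaPow (x * y) := by rw [hex]
      _ = (y * x) * (omegaPow (x * y) * omegaPow (x * y)) := by simp [mul_assoc]
      _ = (y * x) * omegaPow (x * y) := by rw [hee]
      _ = (y * x) * omegaPow (y * x) := by rw [hswap]
      _ = omegaPow (y * x) := haper (y * x)
      _ = omegaPow (x * y) := hswap.symm
  have hz : x * omegaPow (x * y) = omegaPow (x * y) :=
    unit_trick (omegaPow (x * y)) (x * omegaPow (x * y)) (y * omegaPow (x * y))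
      hzw hze hew (haper _)
  have hw : y * omegaPow (x * y) = omegaPow (x * y) :=
    unit_trick (omegaPow (x * y)) (y * omegaPow (x * y)) (x * omegaPow (x * y))
      hwz hwe hez (haper _)
  exact ⟨by rw [hex]; exact hz, hw⟩

end Aux

/-- A finite monoid is `J`-trivial iff it satisfies `(xy)^ω = (yx)^ω` and
`x·x^ω = x^ω`, iff it satisfies `(xy)^ω·x = (xy)^ω` and `y·(xy)^ω = (xy)^ω`. -/
theorem jtrivial_iff_identities (M : Type) [Monoid M] [Fintype M] :
    (JTrivial M ↔
      ∀ x y : M, omegaPow (x * y) = omegaPow (y * x) ∧ x * omegaPow x = omegaPow x) ∧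
    (JTrivial M ↔
      ∀ x y : M, omegaPow (x * y) * x = omegaPow (x * y) ∧
        y * omegaPow (x * y) = omegaPow (x * y)) := by
  constructor
  · exact ⟨fun h x y => jt_to_p2 h x y, fun h => p3_to_jt (p2_to_p3 h)⟩
  · exact ⟨fun h x y => jt_to_p3 h x y, fun h => p3_to_jt h⟩
end

section
/- A finite monoid M satisfies x·x^ω = x^ω for all x ∈ M if and only if M contains no nontrivial group; that is, if and only if for every nontrivial finite group G there is no injective map f : G → M satisfying f(g·h) = f(g)·f(h) for all g, h ∈ G. -/
section Aux

variable {M : Type} [Monoid M]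

/-- If `x^a = x^(a+d)`, the same periodicity holds for any exponent `≥ a`. -/
lemma pow_period_tail (x : M) {a d : ℕ} (h : x ^ a = x ^ (a + d)) {n : ℕ} (han : a ≤ n) :
    x ^ n = x ^ (n + d) := by
  obtain ⟨c, rfl⟩ := Nat.exists_eq_add_of_le han
  calc x ^ (a + c) = x ^ a * x ^ c := by rw [pow_add]
    _ = x ^ (a + d) * x ^ c := by rw [h]
    _ = x ^ (a + c + d) := by rw [← pow_add]; ring_nf

/-- If `x^a = x^(a+d)`, then `x^m = x^n` whenever `a ≤ m ≤ n` and `d ∣ n - m`. -/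
lemma pow_eq_of_period (x : M) {a d : ℕ} (h : x ^ a = x ^ (a + d))
    {m n : ℕ} (ham : a ≤ m) (hmn : m ≤ n) (hd : d ∣ n - m) : x ^ m = x ^ n := by
  have key : ∀ k : ℕ, x ^ m = x ^ (m + k * d) := by
    intro k
    induction k with
    | zero => simp
    | succ k ih =>
      have h2 : m + (k + 1) * d = (m + k * d) + d := by ring
      rw [h2, ← pow_period_tail x h (le_trans ham (Nat.le_add_right m _))]
      exact ih
  obtain ⟨k, hk⟩ := hd
  have hn : n = m + k * d := by rw [Nat.mul_comm]; omega
  rw [hn]; exact key k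

end Aux

/-- A finite monoid is aperiodic (`x·x^ω = x^ω` for all `x`) iff it contains no
nontrivial group, i.e. no injective multiplication-preserving map from a nontrivial
finite group into `M` exists. -/
theorem aperiodic_iff_no_nontrivial_group (M : Type) [Monoid M] [Fintype M] :
    (∀ x : M, x * omegaPow x = omegaPow x) ↔
      ∀ (G : Type) [Group G] [Fintype G], Nontrivial G →
        ¬∃ f : G → M, Function.Injective f ∧ ∀ g h : G, f (g * h) = f g * f h := by
  constructor
  · -- aperiodic → no nontrivial group
    intro hap G _ _ hnt ⟨f, hinj, hmul⟩
    obtain ⟨g, hg⟩ := exists_ne (1 : G)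
    set N := (Fintype.card M).factorial with hN
    have hN1 : 1 ≤ N := (Fintype.card M).factorial_pos
    have hpow : ∀ n : ℕ, f (g ^ (n + 1)) = (f g) ^ (n + 1) := by
      intro n
      induction n with
      | zero => simp
      | succ n ih =>
        rw [pow_succ, hmul, ih, ← pow_succ]
    have h2 : f (g ^ N) = (f g) ^ N := by
      have := hpow (N - 1)
      rwa [Nat.sub_add_cancel hN1] at this
    have key : f (g ^ (N + 1)) = f (g ^ N) := by
      have h1 : f (g ^ (N + 1)) = (f g) ^ (N + 1) := hpow N
      have h3 := hap (f g)
      rw [omegaPow, ← hN] at h3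
      rw [h1, h2, pow_succ', h3]
    have h4 : g ^ N * g = g ^ N := by
      have := hinj key
      rwa [pow_succ] at this
    apply hg
    have h5 : g ^ N * g = g ^ N * 1 := by rw [mul_one]; exact h4
    exact mul_left_cancel h5
  · -- no nontrivial group → aperiodic
    intro hno x
    by_contra hx
    classical
    set c := Fintype.card M with hc
    have hc1 : 1 ≤ c := Fintype.card_pos
    set N := c.factorial with hNdef
    -- pigeonhole: some repetition among x^0, ..., x^c
    have hni : ¬ Function.Injective (fun n : Fin (c + 1) => x ^ (n : ℕ)) := by
      intro hinj
      have := Fintype.card_le_of_injective _ hinj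
      simp [← hc] at this
    obtain ⟨a, b, hab, hne⟩ : ∃ a b : Fin (c + 1), x ^ (a : ℕ) = x ^ (b : ℕ) ∧ a ≠ b := by
      rw [Function.not_injective_iff] at hni
      obtain ⟨a, b, h1, h2⟩ := hni
      exact ⟨a, b, h1, h2⟩
    have ha' : (a : ℕ) ≤ c := by omega
    have hb' : (b : ℕ) ≤ c := by omega
    obtain ⟨A, d, hd0, hAc, hdc, hper⟩ :
        ∃ A d : ℕ, 0 < d ∧ A ≤ c ∧ d ≤ c ∧ x ^ A = x ^ (A + d) := by
      rcases lt_or_gt_of_ne (fun h => hne (Fin.val_injective h)) with h | h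
      · exact ⟨a, b - a, by omega, by omega, by omega,
          by rw [hab]; congr 1; omega⟩
      · exact ⟨b, a - b, by omega, by omega, by omega,
          by rw [← hab]; congr 1; omega⟩
    have hAN : A ≤ N := le_trans hAc (Nat.self_le_factorial c)
    -- x^N has period d
    have hNd : x ^ N = x ^ (N + d) := pow_period_tail x hper hAN
    -- least period p of x^N
    have hPex : ∃ p : ℕ, 0 < p ∧ x ^ N = x ^ (N + p) := ⟨d, hd0, hNd⟩
    set p := Nat.find hPex with hpdef
    obtain ⟨hp0, hNp⟩ : 0 < p ∧ x ^ N = x ^ (N + p) := Nat.find_spec hPex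
    have hpd : p ≤ d := Nat.find_le ⟨hd0, hNd⟩
    have hpN : p ∣ N := Nat.dvd_factorial hp0 (le_trans hpd hdc)
    have hp2 : 2 ≤ p := by
      by_contra hcon
      have hp1 : p = 1 := by omega
      rw [hp1] at hNp
      apply hx
      rw [omegaPow, ← hc, ← hNdef]
      calc x * x ^ N = x ^ (N + 1) := (pow_succ' x N).symm
        _ = x ^ N := hNp.symm
    -- congruence lemma
    have hcong : ∀ m n : ℕ, N ≤ m → m ≤ n → p ∣ n - m → x ^ m = x ^ n :=
      fun m n h1 h2 h3 => pow_eq_of_period x hNp h1 h2 h3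
    -- minimality: no smaller positive period
    have hmin : ∀ q : ℕ, 0 < q → q < p → x ^ N ≠ x ^ (N + q) := by
      intro q hq0 hqp heq
      exact Nat.find_min hPex hqp ⟨hq0, heq⟩
    -- build the nontrivial group
    haveI : NeZero p := ⟨by omega⟩
    haveI : Fact (1 < p) := ⟨by omega⟩
    apply hno (Multiplicative (ZMod p)) inferInstance
    refine ⟨fun g => x ^ (N + (Multiplicative.toAdd g).val), ?_, ?_⟩
    · -- injectivity
      intro g h heq
      simp only at heq
      set s := (Multiplicative.toAdd g).val with hs
      set t := (Multiplicative.toAdd h).val with ht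
      have hsp : s < p := ZMod.val_lt _
      have htp : t < p := ZMod.val_lt _
      have hst : s = t := by
        by_contra hne'
        have key : ∀ u v : ℕ, u < v → v < p → x ^ (N + u) = x ^ (N + v) → False := by
          intro u v hlt hvp' heq'
          have h1 : x ^ (N + u) * x ^ (p - v) = x ^ (N + v) * x ^ (p - v) := by rw [heq']
          rw [← pow_add, ← pow_add] at h1
          have h2 : N + v + (p - v) = N + p := by omega
          rw [h2, ← hNp] at h1
          have h3 : N + u + (p - v) = N + (u + (p - v)) := by omega
          rw [h3] at h1
          exact hmin (u + (p - v)) (by omega) (by omega) h1.symm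
        rcases Nat.lt_or_ge s t with h' | h'
        · exact key s t h' htp heq
        · exact key t s (by omega) hsp heq.symm
      have hval : Multiplicative.toAdd g = Multiplicative.toAdd h := by
        have := ZMod.val_injective (n := p)
        exact this hst
      exact Multiplicative.toAdd.injective hval
    · -- multiplicativity
      intro g h
      simp only [toAdd_mul]
      set s := (Multiplicative.toAdd g).val
      set t := (Multiplicative.toAdd h).val
      rw [← pow_add]
      have hval : (Multiplicative.toAdd g + Multiplicative.toAdd h).val = (s + t) % p :=
        ZMod.val_add _ _
      rw [hval]
      apply hcong
      · exact Nat.le_add_right _ _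
      · have := Nat.mod_le (s + t) p
        omega
      · have h1 : (s + t) % p ≤ s + t := Nat.mod_le _ _
        have h2 : p ∣ (s + t) - (s + t) % p := Nat.dvd_sub_mod _
        obtain ⟨k1, hk1⟩ := hpN
        obtain ⟨k2, hk2⟩ := h2
        have hexp : p * (k1 + k2) = p * k1 + p * k2 := by ring
        exact ⟨k1 + k2, by omega⟩
end

section
/- A finite monoid M satisfies (xyz)^ω·y·(xyz)^ω = (xyz)^ω for all x, y, z ∈ M if and only if M satisfies both (xy)^ω·(yx)^ω·(xy)^ω = (xy)^ω for all x, y ∈ M and x·x^ω = x^ω for all x ∈ M. -/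
/-- Shift identity: `(ab)^n · a = a · (ba)^n`. -/
private lemma shift_pow {M : Type} [Monoid M] (a b : M) :
    ∀ n : ℕ, (a * b) ^ n * a = a * (b * a) ^ n := by
  intro n
  induction n with
  | zero => simp
  | succ k ih =>
    calc (a * b) ^ (k + 1) * a = (a * b) * ((a * b) ^ k * a) := by
          rw [pow_succ', mul_assoc]
      _ = a * b * (a * (b * a) ^ k) := by rw [ih]
      _ = a * ((b * a) * (b * a) ^ k) := by simp only [mul_assoc]
      _ = a * (b * a) ^ (k + 1) := by rw [← pow_succ']

/-- Aperiodic absorption: if `a·e = a`, `a·p = e`, and the monoid satisfies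
`m·m^n = m^n`, with `n ≥ 1`, then `a = e`. -/
private lemma aperiodic_absorb {M : Type} [Monoid M] (n : ℕ) (hn : 1 ≤ n)
    (hap : ∀ m : M, m * m ^ n = m ^ n) (e a p : M)
    (hae : a * e = a) (hp : a * p = e) : a = e := by
  have h2 : a = a * a * p := by
    conv_lhs => rw [← hae, ← hp]
    rw [mul_assoc]
  have claim : ∀ k, a = a ^ (k + 1) * p ^ k := by
    intro k
    induction k with
    | zero => simp
    | succ k ih =>
      calc a = a ^ (k + 1) * p ^ k := ih
        _ = a ^ k * a * p ^ k := by rw [pow_succ]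
        _ = a ^ k * (a * a * p) * p ^ k := by rw [← h2]
        _ = a ^ k * a * a * (p * p ^ k) := by
            simp only [mul_assoc]
        _ = a ^ (k + 1 + 1) * p ^ (k + 1) := by
            rw [pow_succ, pow_succ, pow_succ' p k]
  obtain ⟨m, rfl⟩ : ∃ m, n = m + 1 := ⟨n - 1, (Nat.succ_pred_eq_of_pos hn).symm⟩
  have he : e = a ^ (m + 1) * p ^ (m + 1) := by
    calc e = a * p := hp.symm
      _ = a ^ (m + 1) * p ^ m * p := by rw [← claim m]
      _ = a ^ (m + 1) * (p ^ m * p) := by rw [mul_assoc]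
      _ = a ^ (m + 1) * p ^ (m + 1) := by rw [← pow_succ]
  calc a = a ^ (m + 1 + 1) * p ^ (m + 1) := claim (m + 1)
    _ = a * a ^ (m + 1) * p ^ (m + 1) := by rw [pow_succ']
    _ = a ^ (m + 1) * p ^ (m + 1) := by rw [hap a]
    _ = e := he.symm

private lemma pow_idem {M : Type} [Monoid M] (e : M) (hee : e * e = e) :
    ∀ k : ℕ, e ^ (k + 1) = e := by
  intro k
  induction k with
  | zero => simp
  | succ k ih => rw [pow_succ, ih, hee]

/-- A finite monoid satisfies `(xyz)^ω·y·(xyz)^ω = (xyz)^ω` iff it satisfies both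
`(xy)^ω·(yx)^ω·(xy)^ω = (xy)^ω` and `x·x^ω = x^ω`. -/
theorem DA_iff_alternative_identities (M : Type) [Monoid M] [Fintype M] :
    (∀ x y z : M,
        omegaPow (x * y * z) * y * omegaPow (x * y * z) = omegaPow (x * y * z)) ↔
      ((∀ x y : M,
          omegaPow (x * y) * omegaPow (y * x) * omegaPow (x * y) = omegaPow (x * y)) ∧
        ∀ x : M, x * omegaPow x = omegaPow x) := by
  set N := (Fintype.card M).factorial with hNdef
  have hN : 1 ≤ N := (Fintype.card M).factorial_pos
  simp only [omegaPow]
  constructor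
  · intro h
    -- idempotence: m^N * m^N = m^N
    have idem : ∀ m : M, m ^ N * m ^ N = m ^ N := by
      intro m
      have := h m 1 1
      simpa using this
    -- m^(N + k*N) = m^N
    have idemk : ∀ (m : M) (k : ℕ), m ^ (N + k * N) = m ^ N := by
      intro m k
      induction k with
      | zero => simp
      | succ k ih =>
        have : N + (k + 1) * N = (N + k * N) + N := by ring
        rw [this, pow_add, ih, idem]
    constructor
    · intro x y
      have key := h x ((y * x) ^ N) y
      have hxy : x * (y * x) ^ N * y = (x * y) ^ (N + 1) := by
        calc x * (y * x) ^ N * y = (x * y) ^ N * x * y := by rw [← shift_pow]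
          _ = (x * y) ^ N * (x * y) := by rw [mul_assoc]
          _ = (x * y) ^ (N + 1) := by rw [← pow_succ]
      rw [hxy] at key
      have hpow : ((x * y) ^ (N + 1)) ^ N = (x * y) ^ N := by
        rw [← pow_mul]
        have : (N + 1) * N = N + N * N := by ring
        rw [this, idemk]
      rwa [hpow] at key
    · intro x
      have key := h 1 x 1
      simp only [one_mul, mul_one] at key
      -- key : x^N * x * x^N = x^N
      calc x * x ^ N = x * (x ^ N * x ^ N) := by rw [idem]
        _ = x * x ^ N * x ^ N := by rw [mul_assoc]
        _ = x ^ N * x * x ^ N := by rw [← pow_succ', ← pow_succ]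
        _ = x ^ N := key
  · rintro ⟨ha, hb⟩
    intro x y z
    set u := x * y * z with hu
    set e := u ^ N with he
    -- powers of u above N collapse
    have hstep : ∀ k, u ^ (N + k) = u ^ N := by
      intro k
      induction k with
      | zero => simp
      | succ k ih =>
        rw [← Nat.add_assoc, pow_succ, ih, ← pow_succ, pow_succ']
        exact hb u
    have hee : e * e = e := by
      rw [he, ← pow_add, hstep]
    obtain ⟨m, hm⟩ : ∃ m, N = m + 1 := ⟨N - 1, (Nat.succ_pred_eq_of_pos hN).symm⟩
    have heN : e ^ N = e := by rw [hm]; exact pow_idem e hee m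
    set v := z * u ^ m * x with hv
    have hvy : (z * (x * y)) ^ N = v * y := by
      calc (z * (x * y)) ^ N = (z * (x * y)) ^ m * (z * (x * y)) := by rw [hm, pow_succ]
        _ = (z * (x * y)) ^ m * z * (x * y) := by rw [mul_assoc]
        _ = z * ((x * y) * z) ^ m * (x * y) := by rw [shift_pow]
        _ = z * u ^ m * (x * y) := by rw [hu]
        _ = v * y := by rw [hv, mul_assoc, mul_assoc, mul_assoc]
    -- e * (v*y) * e = e, from identity (a) on (x*y, z)
    have hge : e * (v * y) * e = e := by
      have := ha (x * y) z
      rw [hvy] at this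
      rw [he, hu]
      exact this
    -- apply identity (a) to the pair (e*v, y*e)
    have key := ha (e * v) (y * e)
    have h1 : e * v * (y * e) = e := by
      have := hge
      simp only [mul_assoc] at this ⊢
      exact this
    have h2 : y * e * (e * v) = y * e * v := by
      simp only [mul_assoc]
      rw [← mul_assoc e e v, hee]
    rw [h1, h2, heN] at key
    -- key : e * (y * e * v) ^ N * e = e
    set w := y * e * v with hw
    have hexp : e * w ^ N * e = (e * y * e) * (v * w ^ m * e) := by
      calc e * w ^ N * e = e * (w * w ^ m) * e := by rw [hm, pow_succ']
        _ = e * (y * e * v * w ^ m) * e := by rw [hw]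
        _ = (e * y * e) * (v * w ^ m * e) := by
            simp only [mul_assoc]
    rw [hexp] at key
    -- now use aperiodic absorption with a = e*y*e, p = v*w^m*e
    have hae : (e * y * e) * e = e * y * e := by
      simp only [mul_assoc, hee]
    exact aperiodic_absorb N hN hb e (e * y * e) (v * w ^ m * e) hae key
end

section
/- Let A be a finite alphabet, M, N, N' finite monoids, φ : A* → M a surjective homomorphism, and ψ : A* → N, ψ' : N → N' homomorphisms. Then for all n₁, n₂ ∈ N, the base monoid of ker(ψ∘φ⁻¹) at (n₁, n₂) divides the base monoid of ker((ψ'∘ψ)∘φ⁻¹) at (ψ'(n₁), ψ'(n₂)). -/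
/-- `M` divides `N`: `M` is the image of a submonoid of `N` under a surjective
monoid homomorphism. -/
def MonoidDivides (M N : Type) [Monoid M] [Monoid N] : Prop :=
  ∃ (S : Submonoid N) (f : S →* M), Function.Surjective f

/-- The submonoid `U(n₁,n₂)` of words stabilizing `n₁` on the right and `n₂` on the left. -/
def stabSubmonoid {A N : Type} [Monoid N] (ψ : FreeMonoid A →* N) (n₁ n₂ : N) :
    Submonoid (FreeMonoid A) where
  carrier := {u | n₁ * ψ u = n₁ ∧ ψ u * n₂ = n₂}
  one_mem' := by simp
  mul_mem' := by
    rintro a b ⟨ha1, ha2⟩ ⟨hb1, hb2⟩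
    refine ⟨?_, ?_⟩
    · rw [map_mul, ← mul_assoc, ha1, hb1]
    · rw [map_mul, mul_assoc, hb2, ha2]

theorem mem_stabSubmonoid {A N : Type} [Monoid N] (ψ : FreeMonoid A →* N) (n₁ n₂ : N)
    (u : FreeMonoid A) : u ∈ stabSubmonoid ψ n₁ n₂ ↔ n₁ * ψ u = n₁ ∧ ψ u * n₂ = n₂ :=
  Iff.rfl

/-- The congruence on `U(n₁,n₂)` identifying `u, u'` whenever they are equivalent as
arrows of the kernel category `ker (ψ ∘ φ⁻¹)`, i.e. `φ(v·u·w) = φ(v·u'·w)` for all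
contexts `v, w` with `ψ v = n₁` and `ψ w = n₂`. -/
def baseCon {A M N : Type} [Monoid M] [Monoid N] (φ : FreeMonoid A →* M)
    (ψ : FreeMonoid A →* N) (n₁ n₂ : N) : Con ↥(stabSubmonoid ψ n₁ n₂) where
  r u u' := ∀ v w : FreeMonoid A, ψ v = n₁ → ψ w = n₂ →
    φ (v * (u : FreeMonoid A) * w) = φ (v * (u' : FreeMonoid A) * w)
  iseqv := ⟨fun _ _ _ _ _ => rfl, fun h v w hv hw => (h v w hv hw).symm,
    fun h1 h2 v w hv hw => (h1 v w hv hw).trans (h2 v w hv hw)⟩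
  mul' := by
    intro a b c d h₁ h₂ v w hv hw
    have hva : ψ (v * (a : FreeMonoid A)) = n₁ := by
      rw [map_mul, hv, ((mem_stabSubmonoid ψ n₁ n₂ _).mp a.2).1]
    have hwd : ψ ((d : FreeMonoid A) * w) = n₂ := by
      rw [map_mul, hw, ((mem_stabSubmonoid ψ n₁ n₂ _).mp d.2).2]
    have e₂ := h₂ (v * (a : FreeMonoid A)) w hva hw
    have e₁ := h₁ v ((d : FreeMonoid A) * w) hv hwd
    simp only [Submonoid.coe_mul, mul_assoc] at e₁ e₂ ⊢
    rw [e₂, e₁]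

/-- The base monoid of the kernel category `ker (ψ ∘ φ⁻¹)` at the object `(n₁, n₂)`:
the quotient of `U(n₁,n₂)` by the congruence identifying equivalent arrows. -/
abbrev BaseMonoid {A M N : Type} [Monoid M] [Monoid N] (φ : FreeMonoid A →* M)
    (ψ : FreeMonoid A →* N) (n₁ n₂ : N) : Type :=
  (baseCon φ ψ n₁ n₂).Quotient

/-- The base monoid of `ker (ψ ∘ φ⁻¹)` at `(n₁, n₂)` divides the base monoid of
`ker ((ψ' ∘ ψ) ∘ φ⁻¹)` at `(ψ' n₁, ψ' n₂)`. -/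
theorem base_monoid_divides (A : Type) [Fintype A] (M N N' : Type)
    [Monoid M] [Fintype M] [Monoid N] [Fintype N] [Monoid N'] [Fintype N']
    (φ : FreeMonoid A →* M) (hφ : Function.Surjective φ)
    (ψ : FreeMonoid A →* N) (ψ' : N →* N') (n₁ n₂ : N) :
    MonoidDivides (BaseMonoid φ ψ n₁ n₂) (BaseMonoid φ (ψ'.comp ψ) (ψ' n₁) (ψ' n₂)) := by
  have hle : stabSubmonoid ψ n₁ n₂ ≤ stabSubmonoid (ψ'.comp ψ) (ψ' n₁) (ψ' n₂) := by
    rintro u ⟨h1, h2⟩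
    constructor
    · simp only [MonoidHom.comp_apply, ← map_mul, h1]
    · simp only [MonoidHom.comp_apply, ← map_mul, h2]
  set g : ↥(stabSubmonoid ψ n₁ n₂) →* BaseMonoid φ (ψ'.comp ψ) (ψ' n₁) (ψ' n₂) :=
    (baseCon φ (ψ'.comp ψ) (ψ' n₁) (ψ' n₂)).mk'.comp (Submonoid.inclusion hle) with hg
  have H : Con.ker g ≤ baseCon φ ψ n₁ n₂ := by
    intro u u' h
    have h' : baseCon φ (ψ'.comp ψ) (ψ' n₁) (ψ' n₂)
        (Submonoid.inclusion hle u) (Submonoid.inclusion hle u') := by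
      rw [← Con.eq]; exact h
    intro v w hv hw
    exact h' v w (by simp [hv]) (by simp [hw])
  refine ⟨MonoidHom.mrange g,
    ((Con.ker g).lift (baseCon φ ψ n₁ n₂).mk' (by rw [← Con.mk'_ker (c := baseCon φ ψ n₁ n₂)] at H; exact H)).comp
      (Con.quotientKerEquivRange g).symm.toMonoidHom, ?_⟩
  intro m
  obtain ⟨u, rfl⟩ := Con.mk'_surjective (c := baseCon φ ψ n₁ n₂) m
  refine ⟨Con.quotientKerEquivRange g ((Con.ker g).mk' u), ?_⟩
  simp [Con.lift_mk']
end

section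
/- Let V be a pseudovariety of finite monoids, A a finite alphabet, and φ : A* → M a surjective homomorphism onto a finite monoid M. Suppose there exist a homomorphism ψ : A* → N onto a finite monoid N and a homomorphism h : (N×A×N)* → K into a finite monoid K ∈ V such that for all v, w ∈ A*, ψ(v) = ψ(w) and h(τ_ψ(v)) = h(τ_ψ(w)) together imply φ(v) = φ(w). Then every base monoid of ker(ψ∘φ⁻¹) belongs to V. -/
/-- A pseudovariety of finite monoids: a class of (necessarily finite) monoids
closed under division and finite direct products. -/
structure Pseudovariety : Type 1 where
  mem : ∀ (M : Type) [Monoid M], Prop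
  finite_of_mem : ∀ (M : Type) [Monoid M], mem M → Finite M
  closed_div : ∀ (M N : Type) [Monoid M] [Monoid N], MonoidDivides M N → mem N → mem M
  mem_prod : ∀ (M N : Type) [Monoid M] [Monoid N], mem M → mem N → mem (M × N)
  mem_unit : mem PUnit

/-- Auxiliary function for the transduction `τ_ψ`, accumulating the image of the
prefix read so far. -/
def tauAux {A N : Type} [Monoid N] (ψ : FreeMonoid A →* N) : N → List A → List (N × A × N)
  | _, [] => []
  | p, a :: rest =>
    (p, a, ψ (FreeMonoid.ofList rest)) :: tauAux ψ (p * ψ (FreeMonoid.of a)) rest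

/-- The transduction `τ_ψ : A* → (N × A × N)*` sending `a₁ ⋯ aₙ` to `σ₁ ⋯ σₙ` where
`σᵢ = (ψ(a₁ ⋯ a_{i-1}), aᵢ, ψ(a_{i+1} ⋯ aₙ))`. -/
def tau {A N : Type} [Monoid N] (ψ : FreeMonoid A →* N) (w : FreeMonoid A) :
    FreeMonoid (N × A × N) :=
  FreeMonoid.ofList (tauAux ψ 1 (FreeMonoid.toList w))


section AuxTau
variable {A N : Type} [Monoid N] (ψ : FreeMonoid A →* N)

/-- Segment transduction with left accumulator `p` and right outer context `q`. -/
def tauSeg (q : N) : N → List A → List (N × A × N)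
  | _, [] => []
  | p, a :: rest =>
    (p, a, ψ (FreeMonoid.ofList rest) * q) :: tauSeg q (p * ψ (FreeMonoid.of a)) rest

theorem tauSeg_append (q p : N) (l₁ l₂ : List A) :
    tauSeg ψ q p (l₁ ++ l₂) =
      tauSeg ψ (ψ (FreeMonoid.ofList l₂) * q) p l₁ ++
        tauSeg ψ q (p * ψ (FreeMonoid.ofList l₁)) l₂ := by
  induction l₁ generalizing p with
  | nil => simp [tauSeg, FreeMonoid.ofList_nil]
  | cons a l ih =>
    simp [tauSeg, ih, FreeMonoid.ofList_cons, FreeMonoid.ofList_append,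
      map_mul, mul_assoc]

theorem tauAux_eq_tauSeg (p : N) (l : List A) : tauAux ψ p l = tauSeg ψ 1 p l := by
  induction l generalizing p with
  | nil => rfl
  | cons a rest ih => simp [tauAux, tauSeg, ih, mul_one]

theorem tau_eq_seg (x : FreeMonoid A) :
    tau ψ x = FreeMonoid.ofList (tauSeg ψ 1 1 (FreeMonoid.toList x)) := by
  rw [tau, tauAux_eq_tauSeg]

end AuxTau

section SegHom
variable {A N K : Type} [Monoid N] [Monoid K] (ψ : FreeMonoid A →* N)
  (h : FreeMonoid (N × A × N) →* K) (n₁ n₂ : N)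

/-- The homomorphism `U(n₁,n₂) →* K` induced by the in-context transduction. -/
def segHom : ↥(stabSubmonoid ψ n₁ n₂) →* K where
  toFun u := h (FreeMonoid.ofList (tauSeg ψ n₂ n₁ (FreeMonoid.toList (u : FreeMonoid A))))
  map_one' := by
    have : FreeMonoid.toList ((1 : ↥(stabSubmonoid ψ n₁ n₂)) : FreeMonoid A) = [] := rfl
    simp [this, tauSeg, FreeMonoid.ofList_nil]
  map_mul' := by
    intro u v
    have hl : FreeMonoid.toList ((↑(u * v) : FreeMonoid A)) =
        FreeMonoid.toList (u : FreeMonoid A) ++ FreeMonoid.toList (v : FreeMonoid A) := rfl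
    have hu := (mem_stabSubmonoid ψ n₁ n₂ _).mp u.2
    have hv := (mem_stabSubmonoid ψ n₁ n₂ _).mp v.2
    simp only [hl, tauSeg_append, FreeMonoid.ofList_toList, hv.2, hu.1,
      FreeMonoid.ofList_append, map_mul]

/-- Factorization of `h ∘ τ_ψ` over a context. -/
theorem h_tau_factor (v w : FreeMonoid A) (hv : ψ v = n₁) (hw : ψ w = n₂)
    (u : ↥(stabSubmonoid ψ n₁ n₂)) :
    h (tau ψ (v * (u : FreeMonoid A) * w)) =
      h (FreeMonoid.ofList (tauSeg ψ n₂ 1 (FreeMonoid.toList v))) *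
        segHom ψ h n₁ n₂ u *
        h (FreeMonoid.ofList (tauSeg ψ 1 n₁ (FreeMonoid.toList w))) := by
  have hu := (mem_stabSubmonoid ψ n₁ n₂ _).mp u.2
  have hl : FreeMonoid.toList (v * (u : FreeMonoid A) * w) =
      (FreeMonoid.toList v ++ FreeMonoid.toList (u : FreeMonoid A)) ++
        FreeMonoid.toList w := rfl
  have hvu : ψ (FreeMonoid.ofList
      (FreeMonoid.toList v ++ FreeMonoid.toList (u : FreeMonoid A))) = n₁ := by
    rw [FreeMonoid.ofList_append, map_mul]
    simp only [FreeMonoid.ofList_toList, hv, hu.1]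
  rw [tau_eq_seg, hl, tauSeg_append, tauSeg_append]
  simp only [hvu, FreeMonoid.ofList_toList, hw, hv, one_mul, mul_one, hu.1, hu.2,
    FreeMonoid.ofList_append, map_mul, segHom]
  rfl

theorem segHom_ker {M : Type} [Monoid M] (φ : FreeMonoid A →* M)
    (hfac : ∀ v w : FreeMonoid A, ψ v = ψ w → h (tau ψ v) = h (tau ψ w) → φ v = φ w)
    (u u' : ↥(stabSubmonoid ψ n₁ n₂)) (he : segHom ψ h n₁ n₂ u = segHom ψ h n₁ n₂ u') :
    baseCon φ ψ n₁ n₂ u u' := by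
  intro v w hv hw
  have hu := (mem_stabSubmonoid ψ n₁ n₂ _).mp u.2
  have hu' := (mem_stabSubmonoid ψ n₁ n₂ _).mp u'.2
  apply hfac
  · simp only [map_mul, hv, hw]
    rw [mul_assoc, hu.2, mul_assoc, hu'.2]
  · rw [h_tau_factor ψ h n₁ n₂ v w hv hw u, h_tau_factor ψ h n₁ n₂ v w hv hw u', he]

end SegHom

/-- If `M ∈ V ** W` is witnessed by `ψ : A* → N` and `h : (N×A×N)* → K ∈ V`, then
every base monoid of the kernel category `ker (ψ ∘ φ⁻¹)` belongs to `V`. -/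
theorem base_monoids_in_V (V : Pseudovariety) (A : Type) [Fintype A]
    (M : Type) [Monoid M] [Fintype M] (φ : FreeMonoid A →* M) (hφ : Function.Surjective φ)
    (N : Type) [Monoid N] [Fintype N] (ψ : FreeMonoid A →* N) (hψ : Function.Surjective ψ)
    (K : Type) [Monoid K] [Fintype K] (hK : V.mem K)
    (h : FreeMonoid (N × A × N) →* K)
    (hfac : ∀ v w : FreeMonoid A, ψ v = ψ w → h (tau ψ v) = h (tau ψ w) → φ v = φ w) :
    ∀ n₁ n₂ : N, V.mem (BaseMonoid φ ψ n₁ n₂) := by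

  intro n₁ n₂
  classical
  have hker : ∀ u u', segHom ψ h n₁ n₂ u = segHom ψ h n₁ n₂ u' → baseCon φ ψ n₁ n₂ u u' :=
    fun u u' => segHom_ker ψ h n₁ n₂ φ hfac u u'
  apply V.closed_div _ K _ hK
  set f := segHom ψ h n₁ n₂ with hfdef
  refine ⟨MonoidHom.mrange f, {
      toFun := fun s => (baseCon φ ψ n₁ n₂).mk' s.2.choose
      map_one' := by
        rw [show (1 : (baseCon φ ψ n₁ n₂).Quotient) =
          ↑(1 : ↥(stabSubmonoid ψ n₁ n₂)) from rfl]
        exact ((baseCon φ ψ n₁ n₂).eq).mpr (hker _ _ (by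
          rw [((1 : MonoidHom.mrange f).2.choose_spec : f _ = _), map_one]
          simp))
      map_mul' := fun s t => ((baseCon φ ψ n₁ n₂).eq).mpr (hker _ _ (by
        rw [((s * t).2.choose_spec : f _ = _), map_mul,
          (s.2.choose_spec : f _ = _), (t.2.choose_spec : f _ = _)]
        rfl)) }, ?_⟩
  intro x
  obtain ⟨u, rfl⟩ := Con.mk'_surjective x
  exact ⟨⟨f u, ⟨u, rfl⟩⟩, ((baseCon φ ψ n₁ n₂).eq).mpr (hker _ _
    ((⟨f u, ⟨u, rfl⟩⟩ : MonoidHom.mrange f).2.choose_spec))⟩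
end

section
/- Let A be a finite alphabet, M and N finite monoids with N J-trivial, φ : A* → M a surjective homomorphism, and ψ : A* → N a homomorphism. Let V be a pseudovariety of finite monoids containing every finite idempotent commutative monoid. If every base monoid of ker(ψ∘φ⁻¹) belongs to V, then M ∈ V ** J; that is, there exist a homomorphism ψ' : A* → N' onto a finite J-trivial monoid N' and a homomorphism h : (N'×A×N')* → K into a finite monoid K ∈ V such that for all v, w ∈ A*, ψ'(v) = ψ'(w) and h(τ_{ψ'}(v)) = h(τ_{ψ'}(w)) together imply φ(v) = φ(w). -/
open FreeMonoid


/-- A bundled finite monoid. -/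
structure BFinMonoid : Type 1 where
  carrier : Type
  [mon : Monoid carrier]
  [fin : Fintype carrier]

attribute [instance] BFinMonoid.mon BFinMonoid.fin

section Main
variable {A M N'' : Type} [Monoid M] [Monoid N'']

theorem jt_right (hJ : JTrivial N'') (p m z : N'') (h : p * m * z = p) : p * m = p := by
  apply hJ
  ext x
  constructor
  · rintro ⟨a, b, rfl⟩
    exact ⟨a, m * b, by simp only [mul_assoc]⟩
  · rintro ⟨a, b, rfl⟩
    refine ⟨a, z * b, ?_⟩
    have : a * (p * m) * (z * b) = a * (p * m * z) * b := by simp only [mul_assoc]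
    rw [this, h]

theorem jt_left (hJ : JTrivial N'') (s m z : N'') (h : z * (m * s) = s) : m * s = s := by
  apply hJ
  ext x
  constructor
  · rintro ⟨a, b, rfl⟩
    exact ⟨a * m, b, by simp only [mul_assoc]⟩
  · rintro ⟨a, b, rfl⟩
    refine ⟨a * z, b, ?_⟩
    have : a * z * (m * s) * b = a * (z * (m * s)) * b := by simp only [mul_assoc]
    rw [this, h]

/-- Context-tagged transduction. -/
def tctx (Ψ : FreeMonoid A →* N'') (p s : N'') : List A → List (N'' × A × N'')
  | [] => []
  | a :: t => (p, a, Ψ (ofList t) * s) :: tctx Ψ (p * Ψ (of a)) s t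

variable (Ψ : FreeMonoid A →* N'')

theorem tctx_cons (p s : N'') (a : A) (t : List A) :
    tctx Ψ p s (a :: t) = (p, a, Ψ (ofList t) * s) :: tctx Ψ (p * Ψ (of a)) s t := rfl

theorem mem_tctx_fst {p s : N''} {l : List A} {σ : N'' × A × N''}
    (h : σ ∈ tctx Ψ p s l) : ∃ z, σ.1 = p * z := by
  induction l generalizing p with
  | nil => simp [tctx] at h
  | cons a t ih =>
    rw [tctx_cons] at h
    rcases List.mem_cons.mp h with h | h
    · exact ⟨1, by rw [h, mul_one]⟩
    · obtain ⟨z, hz⟩ := ih h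
      exact ⟨Ψ (of a) * z, by rw [hz, mul_assoc]⟩

theorem mem_tctx_snd {p s : N''} {l : List A} {σ : N'' × A × N''}
    (h : σ ∈ tctx Ψ p s l) : ∃ z, Ψ (ofList l) * s = z * (Ψ (of σ.2.1) * σ.2.2) := by
  induction l generalizing p with
  | nil => simp [tctx] at h
  | cons a t ih =>
    rw [tctx_cons] at h
    have hcons : Ψ (ofList (a :: t)) = Ψ (of a) * Ψ (ofList t) := by
      rw [show ofList (a :: t) = of a * ofList t from rfl, map_mul]
    rcases List.mem_cons.mp h with h | h
    · refine ⟨1, ?_⟩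
      rw [h, hcons, one_mul, mul_assoc]
    · obtain ⟨z, hz⟩ := ih h
      exact ⟨Ψ (of a) * z, by rw [hcons, mul_assoc, hz, mul_assoc]⟩

open Classical in
/-- Split a word into its maximal smooth prefix and the rest. -/
noncomputable def ssplit (p s : N'') : List A → List A × List A
  | [] => ([], [])
  | a :: t =>
    if p * Ψ (of a) = p ∧ Ψ (of a) * (Ψ (ofList t) * s) = Ψ (ofList t) * s then
      ((a :: (ssplit p s t).1), (ssplit p s t).2)
    else ([], a :: t)

theorem ssplit_spec (p s : N'') (l : List A) :
    l = (ssplit Ψ p s l).1 ++ (ssplit Ψ p s l).2 ∧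
    p * Ψ (ofList (ssplit Ψ p s l).1) = p ∧
    Ψ (ofList (ssplit Ψ p s l).1) * (Ψ (ofList (ssplit Ψ p s l).2) * s)
      = Ψ (ofList (ssplit Ψ p s l).2) * s ∧
    (∀ b ∈ (ssplit Ψ p s l).1, p * Ψ (of b) = p ∧
      Ψ (of b) * (Ψ (ofList (ssplit Ψ p s l).2) * s) = Ψ (ofList (ssplit Ψ p s l).2) * s) ∧
    ((ssplit Ψ p s l).2 = [] ∨ ∃ b t', (ssplit Ψ p s l).2 = b :: t' ∧
      ¬(p * Ψ (of b) = p ∧ Ψ (of b) * (Ψ (ofList t') * s) = Ψ (ofList t') * s)) ∧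
    tctx Ψ p s l = (ssplit Ψ p s l).1.map (fun b => (p, b, Ψ (ofList (ssplit Ψ p s l).2) * s))
      ++ tctx Ψ p s (ssplit Ψ p s l).2 := by
  induction l with
  | nil =>
    simp [ssplit, tctx]
  | cons a t ih =>
    by_cases hcond : p * Ψ (of a) = p ∧ Ψ (of a) * (Ψ (ofList t) * s) = Ψ (ofList t) * s
    · have hs : ssplit Ψ p s (a :: t) = ((a :: (ssplit Ψ p s t).1), (ssplit Ψ p s t).2) := by
        rw [ssplit, if_pos hcond]
      obtain ⟨ih1, ih2, ih3, ih4, ih5, ih6⟩ := ih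
      set u' := (ssplit Ψ p s t).1
      set r' := (ssplit Ψ p s t).2
      have hmul : Ψ (ofList (a :: u')) = Ψ (of a) * Ψ (ofList u') := by
        rw [show ofList (a :: u') = of a * ofList u' from rfl, map_mul]
      have hE : Ψ (ofList t) * s = Ψ (ofList r') * s := by
        conv_lhs => rw [ih1]
        rw [show ofList (u' ++ r') = ofList u' * ofList r' from rfl, map_mul, mul_assoc, ih3]
      have hAs : Ψ (of a) * (Ψ (ofList r') * s) = Ψ (ofList r') * s := by
        rw [← hE]; exact hcond.2
      rw [hs]
      refine ⟨by rw [List.cons_append, ← ih1], ?_, ?_, ?_, ?_, ?_⟩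
      · rw [hmul, ← mul_assoc, hcond.1, ih2]
      · rw [hmul, mul_assoc, ih3, hAs]
      · intro b hb
        rcases List.mem_cons.mp hb with rfl | hb
        · exact ⟨hcond.1, hAs⟩
        · exact ih4 b hb
      · exact ih5
      · show tctx Ψ p s (a :: t) =
          List.map (fun b => (p, b, Ψ (ofList r') * s)) (a :: u') ++ tctx Ψ p s r'
        rw [tctx_cons, hcond.1, ih6, hE, List.map_cons, List.cons_append]
    · have hs : ssplit Ψ p s (a :: t) = ([], a :: t) := by
        rw [ssplit, if_neg hcond]
      rw [hs]
      refine ⟨rfl, ?_, ?_, by simp, Or.inr ⟨a, t, rfl, hcond⟩, by simp⟩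
      · simp [show Ψ (ofList ([] : List A)) = 1 from map_one Ψ]
      · simp [show Ψ (ofList ([] : List A)) = 1 from map_one Ψ]

variable (K : N'' → N'' → Type) [∀ q t, Monoid (K q t)] (f : ∀ q t, N'' × A × N'' → K q t)

open Classical in
noncomputable def Fmap (q t : N'') (σ : N'' × A × N'') : K q t :=
  if σ.1 = q ∧ σ.2.2 = t ∧ q * Ψ (of σ.2.1) = q ∧ Ψ (of σ.2.1) * t = t then f q t σ else 1


variable (φ : FreeMonoid A →* M)

theorem mainLemma (hJ : JTrivial N'')
    (hsub : ∀ (q t : N'') (u u' : List A),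
      (∀ b ∈ u, q * Ψ (of b) = q ∧ Ψ (of b) * t = t) →
      (∀ b ∈ u', q * Ψ (of b) = q ∧ Ψ (of b) * t = t) →
      (u.map (fun b => f q t (q, b, t))).prod = (u'.map (fun b => f q t (q, b, t))).prod →
      ∀ x y : FreeMonoid A, Ψ x = q → Ψ y = t →
        φ (x * ofList u * y) = φ (x * ofList u' * y)) :
    ∀ (n : ℕ) (l l' : List A), l.length ≤ n → ∀ (p s : N''),
      (∀ σ, σ ∈ tctx Ψ p s l ↔ σ ∈ tctx Ψ p s l') →
      (∀ q t0, ((tctx Ψ p s l).map (Fmap Ψ K f q t0)).prod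
            = ((tctx Ψ p s l').map (Fmap Ψ K f q t0)).prod) →
      ∀ v₀ w₀ : FreeMonoid A, Ψ v₀ = p → Ψ w₀ = s →
        φ (v₀ * ofList l * w₀) = φ (v₀ * ofList l' * w₀) := by
  have hofl : ∀ (b : A) (m : List A), Ψ (ofList (b :: m)) = Ψ (of b) * Ψ (ofList m) :=
    fun b m => by rw [show ofList (b :: m) = of b * ofList m from rfl, map_mul]
  intro n
  induction n with
  | zero =>
    intro l l' hlen p s hc _ v₀ w₀ _ _
    have hl : l = [] := List.length_eq_zero_iff.mp (Nat.le_zero.mp hlen)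
    subst hl
    have hl' : l' = [] := by
      cases l' with
      | nil => rfl
      | cons a u =>
        exact absurd ((hc _).mpr (by rw [tctx_cons]; exact List.mem_cons_self))
          (by simp [tctx])
    subst hl'
    rfl
  | succ n ih =>
    intro l l' hlen p s hc hB v₀ w₀ hv₀ hw₀
    cases l with
    | nil =>
      have hl' : l' = [] := by
        cases l' with
        | nil => rfl
        | cons a u =>
          exact absurd ((hc _).mpr (by rw [tctx_cons]; exact List.mem_cons_self))
            (by simp [tctx])
      subst hl'
      rfl
    | cons a t =>
    cases l' with
    | nil =>
      exact absurd ((hc _).mp (by rw [tctx_cons]; exact List.mem_cons_self))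
        (by simp [tctx])
    | cons a' t' =>
    have hσa : (p, a, Ψ (ofList t) * s) ∈ tctx Ψ p s (a :: t) := by
      rw [tctx_cons]; exact List.mem_cons_self
    have hσa' : (p, a', Ψ (ofList t') * s) ∈ tctx Ψ p s (a' :: t') := by
      rw [tctx_cons]; exact List.mem_cons_self
    have h1 := (hc _).mp hσa
    have h2 := (hc _).mpr hσa'
    rw [tctx_cons] at h1 h2
    have hlent : t.length ≤ n := by
      simpa using Nat.le_of_succ_le_succ (by simpa using hlen)
    by_cases HS : p * Ψ (of a) = p ∧ Ψ (of a) * (Ψ (ofList t) * s) = Ψ (ofList t) * s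
    · -- head is smooth
      have key : p * Ψ (of a') = p ∧ Ψ (of a') * (Ψ (ofList t') * s) = Ψ (ofList t') * s ∧
          Ψ (ofList t') * s = Ψ (ofList t) * s := by
        rcases List.mem_cons.mp h1 with heq1 | h1t
        · simp only [Prod.mk.injEq] at heq1
          obtain ⟨-, ha, hs⟩ := heq1
          exact ⟨by rw [← ha]; exact HS.1, by rw [← ha, ← hs]; exact HS.2, hs.symm⟩
        · obtain ⟨z1, hz1⟩ := mem_tctx_fst Ψ h1t
          have hz1' : p = p * Ψ (of a') * z1 := hz1
          have d1 : p * Ψ (of a') = p := jt_right hJ _ _ _ hz1'.symm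
          obtain ⟨z2, hz2⟩ := mem_tctx_snd Ψ h1t
          have hz2' : Ψ (ofList t') * s = z2 * (Ψ (of a) * (Ψ (ofList t) * s)) := hz2
          have d2 : Ψ (ofList t') * s = z2 * (Ψ (ofList t) * s) := by rw [hz2', HS.2]
          rcases List.mem_cons.mp h2 with heq2 | h2t
          · simp only [Prod.mk.injEq] at heq2
            obtain ⟨-, ha, hs⟩ := heq2
            exact ⟨by rw [ha]; exact HS.1, by rw [ha, hs]; exact HS.2, hs⟩
          · obtain ⟨z4, hz4⟩ := mem_tctx_snd Ψ h2t
            have hz4' : Ψ (ofList t) * s = z4 * (Ψ (of a') * (Ψ (ofList t') * s)) := hz4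
            have e1 : z4 * ((Ψ (of a') * z2) * (Ψ (ofList t) * s)) = Ψ (ofList t) * s := by
              conv_rhs => rw [hz4', d2]
              simp only [mul_assoc]
            have hγ : (Ψ (of a') * z2) * (Ψ (ofList t) * s) = Ψ (ofList t) * s :=
              jt_left hJ _ _ _ e1
            have hγ' : Ψ (of a') * (Ψ (ofList t') * s) = Ψ (ofList t) * s := by
              rw [d2, ← mul_assoc]; exact hγ
            have e2 : z2 * (Ψ (of a') * (Ψ (ofList t') * s)) = Ψ (ofList t') * s := by
              rw [hγ']; exact d2.symm
            have hδ : Ψ (of a') * (Ψ (ofList t') * s) = Ψ (ofList t') * s :=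
              jt_left hJ _ _ _ e2
            have hss : Ψ (ofList t') * s = Ψ (ofList t) * s := by rw [← hγ', hδ]
            exact ⟨d1, hδ, hss⟩
      -- split both words
      have hufold : ssplit Ψ p s (a :: t) = (a :: (ssplit Ψ p s t).1, (ssplit Ψ p s t).2) := by
        rw [ssplit, if_pos HS]
      have hufold' : ssplit Ψ p s (a' :: t') =
          (a' :: (ssplit Ψ p s t').1, (ssplit Ψ p s t').2) := by
        rw [ssplit, if_pos ⟨key.1, key.2.1⟩]
      obtain ⟨hl1, hl2, hl3, hl4, hl5, hl6⟩ := ssplit_spec Ψ p s (a :: t)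
      obtain ⟨hm1, hm2, hm3, hm4, hm5, hm6⟩ := ssplit_spec Ψ p s (a' :: t')
      rw [hufold] at hl1 hl2 hl3 hl4 hl5 hl6
      rw [hufold'] at hm1 hm2 hm3 hm4 hm5 hm6
      set u₂ := (ssplit Ψ p s t).1 with hu₂
      set r := (ssplit Ψ p s t).2 with hr
      set u₂' := (ssplit Ψ p s t').1 with hu₂'
      set r' := (ssplit Ψ p s t').2 with hr'
      simp only at hl1 hl2 hl3 hl4 hl5 hl6 hm1 hm2 hm3 hm4 hm5 hm6
      -- suffix value of the smooth block
      have hs1r : Ψ (ofList r) * s = Ψ (ofList t) * s := by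
        have h6 := hl6
        rw [tctx_cons, List.map_cons] at h6
        have := (List.cons.injEq _ _ _ _).mp h6
        have h7 : (p, a, Ψ (ofList t) * s) = (p, a, Ψ (ofList r) * s) := this.1
        simp only [Prod.mk.injEq] at h7
        exact h7.2.2.symm
      have hs1r' : Ψ (ofList r') * s = Ψ (ofList t) * s := by
        have h6 := hm6
        rw [tctx_cons, List.map_cons] at h6
        have := (List.cons.injEq _ _ _ _).mp h6
        have h7 : (p, a', Ψ (ofList t') * s) = (p, a', Ψ (ofList r') * s) := this.1
        simp only [Prod.mk.injEq] at h7
        rw [← h7.2.2]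
        exact key.2.2
      -- disjointness
      have hD : ∀ (m : List A), m = (a :: u₂) ++ r ∨ m = (a' :: u₂') ++ r' → True := fun _ _ => trivial
      have hDgen : ∀ (rr : List A), Ψ (ofList rr) * s = Ψ (ofList t) * s →
          (rr = [] ∨ ∃ b t₀, rr = b :: t₀ ∧
            ¬(p * Ψ (of b) = p ∧ Ψ (of b) * (Ψ (ofList t₀) * s) = Ψ (ofList t₀) * s)) →
          ∀ σ ∈ tctx Ψ p s rr, ¬(σ.1 = p ∧ σ.2.2 = Ψ (ofList t) * s ∧
            p * Ψ (of σ.2.1) = p ∧ Ψ (of σ.2.1) * (Ψ (ofList t) * s) = Ψ (ofList t) * s) := by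
        intro rr hrr hmax σ hσ hSm
        obtain ⟨e1, e2, e3, e4⟩ := hSm
        rcases hmax with rfl | ⟨b, t₀, rfl, hbns⟩
        · simp [tctx] at hσ
        · have hE1 : Ψ (ofList t) * s = Ψ (of b) * (Ψ (ofList t₀) * s) := by
            rw [← hrr, hofl b t₀, mul_assoc]
          rw [tctx_cons] at hσ
          rcases List.mem_cons.mp hσ with heq | htl
          · have e2' : Ψ (ofList t₀) * s = Ψ (ofList t) * s := by rw [← e2, heq]
            have e3' : p * Ψ (of b) = p := by rw [← show σ.2.1 = b from by rw [heq]]; exact e3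
            have e4' : Ψ (of b) * (Ψ (ofList t₀) * s) = Ψ (ofList t₀) * s := by
              rw [e2', ← show σ.2.1 = b from by rw [heq]]; exact e4
            exact hbns ⟨e3', e4'⟩
          · obtain ⟨z, hz⟩ := mem_tctx_fst Ψ htl
            have hα : p * Ψ (of b) = p := by
              refine jt_right hJ _ _ z ?_
              rw [← e1] at hz ⊢
              exact hz.symm
            obtain ⟨z2, hz2⟩ := mem_tctx_snd Ψ htl
            have hsbz : Ψ (ofList t₀) * s = z2 * (Ψ (ofList t) * s) := by
              rw [hz2, e2, e4]
            have hform : z2 * (Ψ (of b) * (Ψ (ofList t₀) * s)) = Ψ (ofList t₀) * s := by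
              rw [← hE1, ← hsbz]
            have hβ := jt_left hJ _ _ _ hform
            exact hbns ⟨hα, hβ⟩
      have hDr := hDgen r hs1r hl5
      have hDr' := hDgen r' hs1r' hm5
      -- content of the remainders
      have hcrgen : ∀ (hd : A) (tl u₀ r₀ : List A),
          Ψ (ofList r₀) * s = Ψ (ofList t) * s →
          (∀ b ∈ hd :: u₀, p * Ψ (of b) = p ∧
            Ψ (of b) * (Ψ (ofList r₀) * s) = Ψ (ofList r₀) * s) →
          (tctx Ψ p s (hd :: tl) = (hd :: u₀).map (fun b => (p, b, Ψ (ofList r₀) * s))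
            ++ tctx Ψ p s r₀) →
          (∀ σ ∈ tctx Ψ p s r₀, ¬(σ.1 = p ∧ σ.2.2 = Ψ (ofList t) * s ∧
            p * Ψ (of σ.2.1) = p ∧ Ψ (of σ.2.1) * (Ψ (ofList t) * s) = Ψ (ofList t) * s)) →
          ∀ σ, σ ∈ tctx Ψ p s r₀ ↔ (σ ∈ tctx Ψ p s (hd :: tl) ∧
            ¬(σ.1 = p ∧ σ.2.2 = Ψ (ofList t) * s ∧
              p * Ψ (of σ.2.1) = p ∧ Ψ (of σ.2.1) * (Ψ (ofList t) * s) = Ψ (ofList t) * s)) := by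
        intro hd tl u₀ r₀ hsr hlet htc hDD σ
        constructor
        · intro h
          exact ⟨by rw [htc]; exact List.mem_append_right _ h, hDD σ h⟩
        · rintro ⟨hm, hns⟩
          rw [htc] at hm
          rcases List.mem_append.mp hm with hmap | h
          · obtain ⟨b, hb, rfl⟩ := List.mem_map.mp hmap
            exact absurd ⟨rfl, hsr, (hlet b hb).1,
              by rw [← hsr]; exact (hlet b hb).2⟩ hns
          · exact h
      have hcr_l := hcrgen a t u₂ r hs1r hl4 hl6 hDr
      have hcr_l' := hcrgen a' t' u₂' r' hs1r' hm4 hm6 hDr'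
      have hcr : ∀ σ, σ ∈ tctx Ψ p s r ↔ σ ∈ tctx Ψ p s r' := by
        intro σ
        rw [hcr_l σ, hcr_l' σ, hc σ]
      -- the (p, s₁)-component of the remainders is trivial
      have hZgen : ∀ (r₀ : List A),
          (∀ σ ∈ tctx Ψ p s r₀, ¬(σ.1 = p ∧ σ.2.2 = Ψ (ofList t) * s ∧
            p * Ψ (of σ.2.1) = p ∧ Ψ (of σ.2.1) * (Ψ (ofList t) * s) = Ψ (ofList t) * s)) →
          ((tctx Ψ p s r₀).map (Fmap Ψ K f p (Ψ (ofList t) * s))).prod = 1 := by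
        intro r₀ hDD
        refine List.prod_eq_one ?_
        intro x hx
        obtain ⟨σ, hσ, rfl⟩ := List.mem_map.mp hx
        exact if_neg (hDD σ hσ)
      have hZr := hZgen r hDr
      have hZr' := hZgen r' hDr'
      -- decomposition of the component products
      have hBdec : ∀ (hd : A) (u₀ r₀ : List A),
          (tctx Ψ p s (hd :: t) = (hd :: u₀).map (fun b => (p, b, Ψ (ofList r₀) * s))
            ++ tctx Ψ p s r₀) → ∀ q t0,
          ((tctx Ψ p s (hd :: t)).map (Fmap Ψ K f q t0)).prod =
          ((hd :: u₀).map (fun b => Fmap Ψ K f q t0 (p, b, Ψ (ofList r₀) * s))).prod *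
            ((tctx Ψ p s r₀).map (Fmap Ψ K f q t0)).prod := by
        intro hd u₀ r₀ htc q t0
        rw [htc, List.map_append, List.prod_append, List.map_map]
        rfl
      have hBdecl := hBdec a u₂ r hl6
      have hBdecl' : ∀ q t0,
          ((tctx Ψ p s (a' :: t')).map (Fmap Ψ K f q t0)).prod =
          ((a' :: u₂').map (fun b => Fmap Ψ K f q t0 (p, b, Ψ (ofList r') * s))).prod *
            ((tctx Ψ p s r').map (Fmap Ψ K f q t0)).prod := by
        intro q t0
        rw [hm6, List.map_append, List.prod_append, List.map_map]
        rfl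
      -- component products of the remainders agree
      have hBr : ∀ q t0, ((tctx Ψ p s r).map (Fmap Ψ K f q t0)).prod
          = ((tctx Ψ p s r').map (Fmap Ψ K f q t0)).prod := by
        intro q t0
        by_cases hqt : q = p ∧ t0 = Ψ (ofList t) * s
        · obtain ⟨rfl, rfl⟩ := hqt
          rw [hZr, hZr']
        · have h := hB q t0
          rw [hBdecl q t0, hBdecl' q t0] at h
          have hmapgen : ∀ (hd : A) (u₀ r₀ : List A), Ψ (ofList r₀) * s = Ψ (ofList t) * s →
              ((hd :: u₀).map (fun b => Fmap Ψ K f q t0 (p, b, Ψ (ofList r₀) * s))).prod = 1 := by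
            intro hd u₀ r₀ hsr
            refine List.prod_eq_one ?_
            intro x hx
            obtain ⟨b, hb, rfl⟩ := List.mem_map.mp hx
            refine if_neg ?_
            rintro ⟨e1, e2, -, -⟩
            exact hqt ⟨e1.symm, by rw [← e2]; exact hsr⟩
          rw [hmapgen a u₂ r hs1r, hmapgen a' u₂' r' hs1r', one_mul, one_mul] at h
          exact h
      -- the smooth blocks have the same base value
      have huu' : ((a :: u₂).map (fun b => f p (Ψ (ofList t) * s) (p, b, Ψ (ofList t) * s))).prod
          = ((a' :: u₂').map
              (fun b => f p (Ψ (ofList t) * s) (p, b, Ψ (ofList t) * s))).prod := by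
        have h := hB p (Ψ (ofList t) * s)
        rw [hBdecl _ _, hBdecl' _ _, hZr, hZr', mul_one, mul_one] at h
        have hconv : ∀ (hd : A) (u₀ r₀ : List A), Ψ (ofList r₀) * s = Ψ (ofList t) * s →
            (∀ b ∈ hd :: u₀, p * Ψ (of b) = p ∧
              Ψ (of b) * (Ψ (ofList r₀) * s) = Ψ (ofList r₀) * s) →
            List.map (fun b => Fmap Ψ K f p (Ψ (ofList t) * s) (p, b, Ψ (ofList r₀) * s))
              (hd :: u₀)
            = List.map (fun b => f p (Ψ (ofList t) * s) (p, b, Ψ (ofList t) * s))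
              (hd :: u₀) := by
          intro hd u₀ r₀ hsr hlet
          refine List.map_congr_left ?_
          intro b hb
          rw [hsr]
          exact if_pos ⟨rfl, rfl, by rw [← hsr] at HS ⊢; exact (hlet b hb).1,
            by rw [← hsr]; exact (hlet b hb).2⟩
        rw [hconv a u₂ r hs1r hl4, hconv a' u₂' r' hs1r' hm4] at h
        exact h
      -- substitute the smooth block and recurse
      have hsmu : ∀ b ∈ a :: u₂, p * Ψ (of b) = p ∧
          Ψ (of b) * (Ψ (ofList t) * s) = Ψ (ofList t) * s := by
        intro b hb
        exact ⟨(hl4 b hb).1, by rw [← hs1r]; exact (hl4 b hb).2⟩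
      have hsmu' : ∀ b ∈ a' :: u₂', p * Ψ (of b) = p ∧
          Ψ (of b) * (Ψ (ofList t) * s) = Ψ (ofList t) * s := by
        intro b hb
        exact ⟨(hm4 b hb).1, by rw [← hs1r']; exact (hm4 b hb).2⟩
      have hsubst := hsub p (Ψ (ofList t) * s) (a :: u₂) (a' :: u₂') hsmu hsmu' huu'
        v₀ (ofList r * w₀) hv₀ (by rw [map_mul, hw₀, hs1r])
      have hlenr : r.length ≤ n := by
        have : t = u₂ ++ r := by
          have := hl1
          rw [List.cons_append] at this
          exact (List.cons.injEq _ _ _ _).mp this |>.2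
        calc r.length ≤ t.length := by rw [this]; simp
        _ ≤ n := hlent
      have hrec := ih r r' hlenr p s hcr hBr (v₀ * ofList (a' :: u₂')) w₀
        (by rw [map_mul, hv₀, hm2]) hw₀
      -- assemble
      have hofsplit : ∀ (hd : A) (tl u₀ r₀ : List A), hd :: tl = (hd :: u₀) ++ r₀ →
          ofList (hd :: tl) = ofList (hd :: u₀) * ofList r₀ := by
        intro hd tl u₀ r₀ hx
        rw [hx]
        rfl
      calc φ (v₀ * ofList (a :: t) * w₀)
          = φ (v₀ * ofList (a :: u₂) * (ofList r * w₀)) := by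
            rw [hofsplit a t u₂ r hl1]
            simp only [mul_assoc]
        _ = φ (v₀ * ofList (a' :: u₂') * (ofList r * w₀)) := hsubst
        _ = φ ((v₀ * ofList (a' :: u₂')) * ofList r * w₀) := by simp only [mul_assoc]
        _ = φ ((v₀ * ofList (a' :: u₂')) * ofList r' * w₀) := hrec
        _ = φ (v₀ * ofList (a' :: t') * w₀) := by
            rw [hofsplit a' t' u₂' r' hm1]
            simp only [mul_assoc]
    · -- head is not smooth
      have hmatch : a' = a ∧ Ψ (ofList t') * s = Ψ (ofList t) * s := by
        rcases List.mem_cons.mp h1 with heq1 | h1t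
        · simp only [Prod.mk.injEq] at heq1
          exact ⟨heq1.2.1.symm, heq1.2.2.symm⟩
        · rcases List.mem_cons.mp h2 with heq2 | h2t
          · simp only [Prod.mk.injEq] at heq2
            exact ⟨heq2.2.1, heq2.2.2⟩
          · exfalso
            obtain ⟨z3, hz3⟩ := mem_tctx_fst Ψ h2t
            have hz3' : p = p * Ψ (of a) * z3 := hz3
            have c1 : p * Ψ (of a) = p := jt_right hJ _ _ _ hz3'.symm
            obtain ⟨z2, hz2⟩ := mem_tctx_snd Ψ h1t
            have hz2' : Ψ (ofList t') * s = z2 * (Ψ (of a) * (Ψ (ofList t) * s)) := hz2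
            obtain ⟨z4, hz4⟩ := mem_tctx_snd Ψ h2t
            have hz4' : Ψ (ofList t) * s = z4 * (Ψ (of a') * (Ψ (ofList t') * s)) := hz4
            have hcomb : (z4 * Ψ (of a') * z2) * (Ψ (of a) * (Ψ (ofList t) * s))
                = Ψ (ofList t) * s := by
              conv_rhs => rw [hz4', hz2']
              simp only [mul_assoc]
            have c2 := jt_left hJ _ _ _ hcomb
            exact HS ⟨c1, c2⟩
      obtain ⟨rfl, hs1eq⟩ := hmatch
      have hnotin : ∀ (m : List A), Ψ (ofList m) * s = Ψ (ofList t) * s →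
          (p, a', Ψ (ofList t) * s) ∉ tctx Ψ (p * Ψ (of a')) s m := by
        intro m hm hmem
        obtain ⟨z, hz⟩ := mem_tctx_fst Ψ hmem
        have hz' : p = p * Ψ (of a') * z := hz
        have c1 : p * Ψ (of a') = p := jt_right hJ _ _ _ hz'.symm
        obtain ⟨z', hz2⟩ := mem_tctx_snd Ψ hmem
        have hz2' : Ψ (ofList m) * s = z' * (Ψ (of a') * (Ψ (ofList t) * s)) := hz2
        have c2 : Ψ (of a') * (Ψ (ofList t) * s) = Ψ (ofList t) * s :=
          jt_left hJ _ _ _ (by rw [← hz2', hm])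
        exact HS ⟨c1, c2⟩
      have hnt := hnotin t rfl
      have hnt' := hnotin t' hs1eq
      have hct : ∀ σ, σ ∈ tctx Ψ (p * Ψ (of a')) s t ↔ σ ∈ tctx Ψ (p * Ψ (of a')) s t' := by
        intro σ
        constructor
        · intro h
          have hσl' := (hc σ).mp (by rw [tctx_cons]; exact List.mem_cons.mpr (Or.inr h))
          rw [tctx_cons] at hσl'
          rcases List.mem_cons.mp hσl' with heq | h'
          · exfalso
            apply hnt
            have hemph : σ = (p, a', Ψ (ofList t) * s) := by rw [heq, hs1eq]
            rw [← hemph]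
            exact h
          · exact h'
        · intro h
          have hσl := (hc σ).mpr (by rw [tctx_cons]; exact List.mem_cons.mpr (Or.inr h))
          rw [tctx_cons] at hσl
          rcases List.mem_cons.mp hσl with heq | h'
          · exfalso
            apply hnt'
            rw [← heq]
            exact h
          · exact h'
      have hFa1 : ∀ q t0, Fmap Ψ K f q t0 (p, a', Ψ (ofList t) * s) = 1 := by
        intro q t0
        refine if_neg ?_
        rintro ⟨e1, e2, e3, e4⟩
        refine HS ⟨?_, ?_⟩
        · rw [show q = p from e1.symm] at e3
          exact e3
        · rw [show (t0 : N'') = Ψ (ofList t) * s from e2.symm] at e4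
          exact e4
      have hBt : ∀ q t0, ((tctx Ψ (p * Ψ (of a')) s t).map (Fmap Ψ K f q t0)).prod
          = ((tctx Ψ (p * Ψ (of a')) s t').map (Fmap Ψ K f q t0)).prod := by
        intro q t0
        have h := hB q t0
        rw [tctx_cons, tctx_cons, List.map_cons, List.map_cons, List.prod_cons,
          List.prod_cons] at h
        rw [hs1eq] at h
        simp only [hFa1, one_mul] at h
        exact h
      have hrec := ih t t' hlent (p * Ψ (of a')) s hct hBt (v₀ * of a') w₀
        (by rw [map_mul, hv₀]) hw₀
      calc φ (v₀ * ofList (a' :: t) * w₀)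
          = φ ((v₀ * of a') * ofList t * w₀) := by
            rw [show ofList (a' :: t) = of a' * ofList t from rfl]
            simp only [mul_assoc]
        _ = φ ((v₀ * of a') * ofList t' * w₀) := hrec
        _ = φ (v₀ * ofList (a' :: t') * w₀) := by
            rw [show ofList (a' :: t') = of a' * ofList t' from rfl]
            simp only [mul_assoc]

end Main



-- 1. J-triviality passes to submonoids
theorem jtrivial_submonoid {N : Type} [Monoid N] (hN : JTrivial N) (S : Submonoid N) :
    JTrivial S := by
  intro s t hset
  have hst : ∃ a b : S, a * t * b = s := by
    have : (s : S) ∈ {x : S | ∃ a b : S, a * s * b = x} := ⟨1, 1, by simp⟩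
    rw [hset] at this
    exact this
  have hts : ∃ a b : S, a * s * b = t := by
    have : (t : S) ∈ {x : S | ∃ a b : S, a * t * b = x} := ⟨1, 1, by simp⟩
    rw [← hset] at this
    exact this
  obtain ⟨a, b, hab⟩ := hst
  obtain ⟨c, d, hcd⟩ := hts
  have hab' : (a : N) * t * b = s := by exact_mod_cast congrArg Subtype.val hab
  have hcd' : (c : N) * s * d = t := by exact_mod_cast congrArg Subtype.val hcd
  have : (s : N) = t := by
    apply hN
    ext x
    constructor
    · rintro ⟨u, v, rfl⟩
      exact ⟨u * a, b * v, by rw [← hab']; simp only [mul_assoc]⟩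
    · rintro ⟨u, v, rfl⟩
      exact ⟨u * c, d * v, by rw [← hcd']; simp only [mul_assoc]⟩
  exact Subtype.ext this

-- 2. The finite idempotent commutative monoid of "sets of letters"
def OrFun (α : Type) : Type := α → Bool

instance (α : Type) : Monoid (OrFun α) where
  mul f g := fun a => f a || g a
  one := fun _ => false
  mul_assoc f g h := by funext a; exact Bool.or_assoc _ _ _
  one_mul f := by funext a; exact Bool.false_or _
  mul_one f := by funext a; exact Bool.or_false _

theorem OrFun.mul_apply {α : Type} (f g : OrFun α) (a : α) : (f * g) a = (f a || g a) := rfl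
theorem OrFun.one_apply {α : Type} (a : α) : (1 : OrFun α) a = false := rfl

instance (α : Type) [Fintype α] [DecidableEq α] : Fintype (OrFun α) :=
  inferInstanceAs (Fintype (α → Bool))

open Classical in
noncomputable def sing {α : Type} (a : α) : OrFun α := fun b => if b = a then true else false

theorem sing_prod_mem {α : Type} (L : List α) (b : α) :
    ((L.map sing).prod : OrFun α) b = true ↔ b ∈ L := by
  induction L with
  | nil => simp [OrFun.one_apply]
  | cons a t ih =>
    rw [List.map_cons, List.prod_cons]
    rw [List.mem_cons, ← ih]
    simp only [OrFun.mul_apply, Bool.or_eq_true]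
    constructor
    · rintro (h | h)
      · left
        by_contra hne
        simp [sing, if_neg hne] at h
      · exact Or.inr h
    · rintro (rfl | h)
      · left; simp [sing]
      · exact Or.inr h

-- 3. division from an injective homomorphism
theorem divides_of_injective {M N : Type} [Monoid M] [Monoid N] (g : M →* N)
    (hg : Function.Injective g) : MonoidDivides M N := by
  classical
  refine ⟨MonoidHom.mrange g, ⟨⟨⟨fun x => Function.invFun g x.1, ?_⟩, ?_⟩, ?_⟩⟩
  · -- map_one
    apply hg
    have h1 : ∃ a, g a = ((1 : MonoidHom.mrange g) : N) := ⟨1, by simp⟩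
    show g (Function.invFun ⇑g ((1 : MonoidHom.mrange g) : N)) = g 1
    rw [Function.invFun_eq (f := ⇑g) h1, map_one]
    simp
  · intro x y
    apply hg
    obtain ⟨x', hx'⟩ := x.2
    obtain ⟨y', hy'⟩ := y.2
    show g (Function.invFun ⇑g ((x * y : MonoidHom.mrange g) : N))
        = g (Function.invFun ⇑g (x : N) * Function.invFun ⇑g (y : N))
    rw [map_mul]
    rw [Function.invFun_eq (f := ⇑g) ⟨x' * y', by rw [map_mul, hx', hy']; rfl⟩]
    rw [Function.invFun_eq (f := ⇑g) ⟨x', hx'⟩, Function.invFun_eq (f := ⇑g) ⟨y', hy'⟩]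
    rfl
  · intro m
    refine ⟨⟨g m, ⟨m, rfl⟩⟩, ?_⟩
    exact hg (Function.invFun_eq (f := ⇑g) ⟨m, rfl⟩)

-- 4. pseudovarieties are closed under finite products over `Fin n` and over a fintype
theorem pv_mem_of_mulEquiv (V : Pseudovariety) {M N : Type} [Monoid M] [Monoid N]
    (e : M ≃* N) (h : V.mem N) : V.mem M :=
  V.closed_div M N (divides_of_injective e.toMonoidHom e.injective) h

def finPiProd (F : ℕ → Type) : ℕ → Type
  | 0 => PUnit
  | n + 1 => F n × finPiProd F n

noncomputable instance finPiMon (F : ℕ → Type) [∀ n, Monoid (F n)] :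
    ∀ n, Monoid (finPiProd F n)
  | 0 => inferInstanceAs (Monoid PUnit)
  | n + 1 => letI := finPiMon F n; inferInstanceAs (Monoid (F n × finPiProd F n))

theorem pv_mem_finPi (V : Pseudovariety) (F : ℕ → Type) [∀ n, Monoid (F n)]
    (hF : ∀ n, V.mem (F n)) : ∀ n, V.mem (finPiProd F n)
  | 0 => V.mem_unit
  | n + 1 => V.mem_prod _ _ (hF n) (pv_mem_finPi V F hF n)

noncomputable def piEmb (F : ℕ → Type) [∀ n, Monoid (F n)] : (n : ℕ) →
    ((∀ i, F i)) →* finPiProd F n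
  | 0 => 1
  | m + 1 =>
    { toFun := fun x => (x m, piEmb F m x)
      map_one' := by
        have h2 := map_one (piEmb F m)
        exact Prod.ext rfl h2
      map_mul' := fun x y => by
        have h2 := map_mul (piEmb F m) x y
        exact Prod.ext rfl h2 }

-- 5. closure under finite dependent products
def listPiProd {ι : Type} (G : ι → Type) : List ι → Type
  | [] => PUnit
  | i :: L => G i × listPiProd G L

instance listPiMon {ι : Type} (G : ι → Type) [∀ i, Monoid (G i)] :
    ∀ L, Monoid (listPiProd G L)
  | [] => inferInstanceAs (Monoid PUnit)
  | i :: L => letI := listPiMon G L; inferInstanceAs (Monoid (G i × listPiProd G L))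

theorem pv_mem_listPi {ι : Type} (V : Pseudovariety) (G : ι → Type) [∀ i, Monoid (G i)]
    (hG : ∀ i, V.mem (G i)) : ∀ L, V.mem (listPiProd G L)
  | [] => V.mem_unit
  | i :: L => V.mem_prod _ _ (hG i) (pv_mem_listPi V G hG L)

def listPiEmb {ι : Type} (G : ι → Type) [∀ i, Monoid (G i)] : (L : List ι) →
    ((∀ i, G i) →* listPiProd G L)
  | [] => 1
  | i :: L =>
    { toFun := fun x => (x i, listPiEmb G L x)
      map_one' := Prod.ext rfl (map_one (listPiEmb G L))
      map_mul' := fun x y => Prod.ext rfl (map_mul (listPiEmb G L) x y) }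

theorem listPiEmb_spec {ι : Type} (G : ι → Type) [∀ i, Monoid (G i)] (L : List ι)
    (x y : ∀ i, G i) (h : listPiEmb G L x = listPiEmb G L y) : ∀ i ∈ L, x i = y i := by
  induction L with
  | nil => intro i hi; simp at hi
  | cons j L ih =>
    intro i hi
    have h1 : x j = y j := congrArg Prod.fst h
    have h2 : listPiEmb G L x = listPiEmb G L y := congrArg Prod.snd h
    rcases List.mem_cons.mp hi with rfl | hi
    · exact h1
    · exact ih h2 i hi

theorem pv_mem_pi {ι : Type} [Fintype ι] (V : Pseudovariety) (G : ι → Type)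
    [∀ i, Monoid (G i)] (hG : ∀ i, V.mem (G i)) : V.mem (∀ i, G i) := by
  refine V.closed_div _ _ (divides_of_injective (listPiEmb G Finset.univ.toList) ?_)
    (pv_mem_listPi V G hG _)
  intro x y h
  funext i
  exact listPiEmb_spec G _ x y h i (by simp)

-- bridging lemmas and the instantiation of the main lemma

theorem tauAux_eq_tctx {A N : Type} [Monoid N] (ψ : FreeMonoid A →* N) :
    ∀ (p : N) (l : List A), tauAux ψ p l = tctx ψ p 1 l := by
  intro p l
  induction l generalizing p with
  | nil => rfl
  | cons a t ih => rw [tauAux, tctx, ih, mul_one]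

section Assemble

variable {A M N : Type} [Monoid M] [Monoid N]
variable (φ : FreeMonoid A →* M) (ψ : FreeMonoid A →* N)

open Classical in
/-- The letter map into the base monoid at `(q, t)`. -/
noncomputable def letterF (q t : ↥(MonoidHom.mrange ψ))
    (σ : ↥(MonoidHom.mrange ψ) × A × ↥(MonoidHom.mrange ψ)) :
    BaseMonoid φ ψ (q : N) (t : N) :=
  if h : q * ψ.mrangeRestrict (of σ.2.1) = q ∧ ψ.mrangeRestrict (of σ.2.1) * t = t then
    Con.mk' _ (⟨of σ.2.1, by
      constructor
      · have := congrArg Subtype.val h.1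
        simpa using this
      · have := congrArg Subtype.val h.2
        simpa using this⟩ : ↥(stabSubmonoid ψ (q : N) (t : N)))
  else 1

theorem ofList_mem_stab (q t : ↥(MonoidHom.mrange ψ)) :
    ∀ (u : List A), (∀ b ∈ u, q * ψ.mrangeRestrict (of b) = q ∧
        ψ.mrangeRestrict (of b) * t = t) →
      ofList u ∈ stabSubmonoid ψ (q : N) (t : N) := by
  intro u hu
  induction u with
  | nil => exact (stabSubmonoid ψ (q : N) (t : N)).one_mem
  | cons b u ih =>
    have hb := hu b (List.mem_cons_self)
    have h1 : (q : N) * ψ (of b) = q := by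
      have := congrArg Subtype.val hb.1; simpa using this
    have h2 : ψ (of b) * (t : N) = t := by
      have := congrArg Subtype.val hb.2; simpa using this
    have hmem : of b ∈ stabSubmonoid ψ (q : N) (t : N) := ⟨h1, h2⟩
    have := (stabSubmonoid ψ (q : N) (t : N)).mul_mem hmem
      (ih (fun c hc => hu c (List.mem_cons_of_mem _ hc)))
    simpa using this

theorem letterF_prod (q t : ↥(MonoidHom.mrange ψ)) (u : List A)
    (hu : ∀ b ∈ u, q * ψ.mrangeRestrict (of b) = q ∧ ψ.mrangeRestrict (of b) * t = t) :
    (u.map (fun b => letterF φ ψ q t (q, b, t))).prod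
      = Con.mk' _ (⟨ofList u, ofList_mem_stab ψ q t u hu⟩ :
          ↥(stabSubmonoid ψ (q : N) (t : N))) := by
  induction u with
  | nil => rfl
  | cons b u ih =>
    rw [List.map_cons, List.prod_cons, ih (fun c hc => hu c (List.mem_cons_of_mem _ hc))]
    have hb := hu b (List.mem_cons_self)
    rw [letterF, dif_pos hb, ← map_mul]
    exact congrArg (baseCon φ ψ ↑q ↑t).mk' (Subtype.ext rfl)

theorem hsub_inst (q t : ↥(MonoidHom.mrange ψ)) (u u' : List A)
    (hu : ∀ b ∈ u, q * ψ.mrangeRestrict (of b) = q ∧ ψ.mrangeRestrict (of b) * t = t)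
    (hu' : ∀ b ∈ u', q * ψ.mrangeRestrict (of b) = q ∧ ψ.mrangeRestrict (of b) * t = t)
    (hprod : (u.map (fun b => letterF φ ψ q t (q, b, t))).prod
      = (u'.map (fun b => letterF φ ψ q t (q, b, t))).prod)
    (x y : FreeMonoid A) (hx : ψ.mrangeRestrict x = q) (hy : ψ.mrangeRestrict y = t) :
    φ (x * ofList u * y) = φ (x * ofList u' * y) := by
  rw [letterF_prod φ ψ q t u hu, letterF_prod φ ψ q t u' hu'] at hprod
  have hrel := (Con.eq _).mp hprod
  have hx' : ψ x = (q : N) := by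
    have := congrArg Subtype.val hx; simpa using this
  have hy' : ψ y = (t : N) := by
    have := congrArg Subtype.val hy; simpa using this
  exact hrel x y hx' hy'

-- product projections for lists
theorem list_prod_fst {α β : Type} [Monoid α] [Monoid β] (L : List (α × β)) :
    L.prod.1 = (L.map Prod.fst).prod := by
  induction L with
  | nil => rfl
  | cons a t ih => rw [List.prod_cons, List.map_cons, List.prod_cons, Prod.fst_mul, ih]

theorem list_prod_snd {α β : Type} [Monoid α] [Monoid β] (L : List (α × β)) :
    L.prod.2 = (L.map Prod.snd).prod := by
  induction L with
  | nil => rfl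
  | cons a t ih => rw [List.prod_cons, List.map_cons, List.prod_cons, Prod.snd_mul, ih]

theorem list_prod_apply {ι : Type} {G : ι → Type} [∀ i, Monoid (G i)]
    (L : List (∀ i, G i)) (i : ι) : L.prod i = (L.map (fun x => x i)).prod := by
  induction L with
  | nil => rfl
  | cons a t ih => rw [List.prod_cons, List.map_cons, List.prod_cons, Pi.mul_apply, ih]

end Assemble

/-- The local–global theorem: if `N` is finite `J`-trivial, `V` is a pseudovariety
containing every finite idempotent commutative monoid, and every base monoid of
`ker (ψ ∘ φ⁻¹)` is in `V`, then `M ∈ V ** J`. -/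
theorem local_global (V : Pseudovariety)
    (hV : ∀ (T : Type) [Monoid T] [Fintype T],
      (∀ x : T, x * x = x) → (∀ x y : T, x * y = y * x) → V.mem T)
    (A : Type) [Fintype A] (M : Type) [Monoid M] [Fintype M]
    (N : Type) [Monoid N] [Fintype N] (hN : JTrivial N)
    (φ : FreeMonoid A →* M) (hφ : Function.Surjective φ) (ψ : FreeMonoid A →* N)
    (hbase : ∀ n₁ n₂ : N, V.mem (BaseMonoid φ ψ n₁ n₂)) :
    ∃ (N' : BFinMonoid) (ψ' : FreeMonoid A →* N'.carrier),
      Function.Surjective ψ' ∧ JTrivial N'.carrier ∧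
      ∃ (K : BFinMonoid) (h : FreeMonoid (N'.carrier × A × N'.carrier) →* K.carrier),
        V.mem K.carrier ∧
        ∀ v w : FreeMonoid A, ψ' v = ψ' w → h (tau ψ' v) = h (tau ψ' w) → φ v = φ w := by
  classical
  letI : Fintype ↥(MonoidHom.mrange ψ) := Fintype.ofFinite _
  have hJ' : JTrivial ↥(MonoidHom.mrange ψ) := jtrivial_submonoid hN _
  letI instFB : ∀ qt : ↥(MonoidHom.mrange ψ) × ↥(MonoidHom.mrange ψ),
      Fintype (BaseMonoid φ ψ (qt.1 : N) (qt.2 : N)) :=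
    fun qt => @Fintype.ofFinite _ (V.finite_of_mem _ (hbase _ _))
  refine ⟨⟨↥(MonoidHom.mrange ψ)⟩, ψ.mrangeRestrict, ψ.mrangeRestrict_surjective, hJ', ?_⟩
  refine ⟨⟨OrFun (↥(MonoidHom.mrange ψ) × A × ↥(MonoidHom.mrange ψ)) ×
      (∀ qt : ↥(MonoidHom.mrange ψ) × ↥(MonoidHom.mrange ψ),
        BaseMonoid φ ψ (qt.1 : N) (qt.2 : N))⟩,
    FreeMonoid.lift (fun σ => ((sing σ, fun qt : ↥(MonoidHom.mrange ψ) × ↥(MonoidHom.mrange ψ) =>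
      Fmap ψ.mrangeRestrict (fun q t => BaseMonoid φ ψ (q : N) (t : N))
        (letterF φ ψ) qt.1 qt.2 σ))), ?_, ?_⟩
  · -- membership of K in V
    refine V.mem_prod _ _ ?_ ?_
    · exact hV _ (fun x => by funext a; exact Bool.or_self _)
        (fun x y => by funext a; exact Bool.or_comm _ _)
    · exact pv_mem_pi V _ (fun qt => hbase _ _)
  · -- the separation property
    intro v w hψeq hheq
    have hlift : ∀ u : FreeMonoid A,
        FreeMonoid.lift (fun σ => ((sing σ, fun qt : ↥(MonoidHom.mrange ψ) × ↥(MonoidHom.mrange ψ) =>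
          Fmap ψ.mrangeRestrict (fun q t => BaseMonoid φ ψ (q : N) (t : N))
            (letterF φ ψ) qt.1 qt.2 σ))) (tau ψ.mrangeRestrict u)
        = ((tctx ψ.mrangeRestrict 1 1 (toList u)).map (fun σ => ((sing σ, fun qt : ↥(MonoidHom.mrange ψ) × ↥(MonoidHom.mrange ψ) =>
            Fmap ψ.mrangeRestrict (fun q t => BaseMonoid φ ψ (q : N) (t : N))
              (letterF φ ψ) qt.1 qt.2 σ)))).prod := by
      intro u
      rw [tau, FreeMonoid.lift_apply, toList_ofList, tauAux_eq_tctx]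
    rw [hlift v, hlift w] at hheq
    have hcontent : ∀ σ, σ ∈ tctx ψ.mrangeRestrict 1 1 (toList v) ↔
        σ ∈ tctx ψ.mrangeRestrict 1 1 (toList w) := by
      intro σ
      have h1 := congrArg Prod.fst hheq
      rw [list_prod_fst, list_prod_fst, List.map_map, List.map_map] at h1
      have h1' : ((List.map sing (tctx ψ.mrangeRestrict 1 1 (toList v))).prod :
            OrFun (↥(MonoidHom.mrange ψ) × A × ↥(MonoidHom.mrange ψ)))
          = (List.map sing (tctx ψ.mrangeRestrict 1 1 (toList w))).prod := h1
      rw [← sing_prod_mem _ σ, ← sing_prod_mem _ σ, h1']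
    have hBmain : ∀ q t0 : ↥(MonoidHom.mrange ψ),
        ((tctx ψ.mrangeRestrict 1 1 (toList v)).map
          (Fmap ψ.mrangeRestrict (fun q t => BaseMonoid φ ψ (q : N) (t : N))
            (letterF φ ψ) q t0)).prod
        = ((tctx ψ.mrangeRestrict 1 1 (toList w)).map
          (Fmap ψ.mrangeRestrict (fun q t => BaseMonoid φ ψ (q : N) (t : N))
            (letterF φ ψ) q t0)).prod := by
      intro q t0
      have h2 := congrArg Prod.snd hheq
      rw [list_prod_snd, list_prod_snd, List.map_map, List.map_map] at h2
      have h3 := congrFun h2 (q, t0)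
      rw [list_prod_apply, list_prod_apply, List.map_map, List.map_map] at h3
      exact h3
    have hmain := mainLemma ψ.mrangeRestrict
      (fun q t => BaseMonoid φ ψ (q : N) (t : N)) (letterF φ ψ) φ hJ'
      (fun q t u u' hu hu' hp x y hx hy => hsub_inst φ ψ q t u u' hu hu' hp x y hx hy)
      (toList v).length (toList v) (toList w) le_rfl 1 1 hcontent hBmain
      1 1 (map_one _) (map_one _)
    rw [one_mul, one_mul, mul_one, mul_one, ofList_toList, ofList_toList] at hmain
    exact hmain
end

section
/- Let n ≥ 1 and let M be a finite monoid satisfying the identity u_n = v_n. Then M satisfies (xy)^ω·(yx)^ω·(xy)^ω = (xy)^ω for all x, y ∈ M. -/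
/-- `chainProd X k = X 1 * X 2 * ⋯ * X k`. -/
def chainProd {M : Type} [Monoid M] (X : ℕ → M) (k : ℕ) : M :=
  ((List.range k).map fun i => X (i + 1)).prod

/-- The value of the term `u_n` under the assignment `X` of the variables `x₁, x₂, …`:
`u₁ = (x₁x₂)^ω` and `u_{n+1} = (x₁⋯x_{2n}x_{2n+1})^ω · u_n · (x_{2n+2}x₁⋯x_{2n})^ω`. -/
def uTerm {M : Type} [Monoid M] [Fintype M] (X : ℕ → M) : ℕ → M
  | 0 => 1
  | 1 => omegaPow (X 1 * X 2)
  | n + 2 => omegaPow (chainProd X (2 * (n + 1) + 1)) * uTerm X (n + 1) *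
      omegaPow (X (2 * (n + 1) + 2) * chainProd X (2 * (n + 1)))

/-- The value of the term `v_n` under the assignment `X`:
`v₁ = (x₂x₁)^ω` and `v_{n+1} = (x₁⋯x_{2n}x_{2n+1})^ω · v_n · (x_{2n+2}x₁⋯x_{2n})^ω`. -/
def vTerm {M : Type} [Monoid M] [Fintype M] (X : ℕ → M) : ℕ → M
  | 0 => 1
  | 1 => omegaPow (X 2 * X 1)
  | n + 2 => omegaPow (chainProd X (2 * (n + 1) + 1)) * vTerm X (n + 1) *
      omegaPow (X (2 * (n + 1) + 2) * chainProd X (2 * (n + 1)))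

section Aux

variable {M : Type} [Monoid M] [Fintype M]

/-- step lemma: if `m^i = m^(i+p)` then `m^(k+p) = m^k` for `k ≥ i`. -/
lemma pow_step (m : M) {i p : ℕ} (hip : m ^ i = m ^ (i + p)) :
    ∀ k, i ≤ k → m ^ (k + p) = m ^ k := by
  intro k hk
  obtain ⟨d, rfl⟩ := Nat.exists_eq_add_of_le hk
  calc m ^ (i + d + p) = m ^ (i + p) * m ^ d := by rw [← pow_add]; ring_nf
    _ = m ^ i * m ^ d := by rw [hip]
    _ = m ^ (i + d) := by rw [← pow_add]

lemma pow_step_mul (m : M) {i p : ℕ} (hip : m ^ i = m ^ (i + p)) :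
    ∀ t k, i ≤ k → m ^ (k + t * p) = m ^ k := by
  intro t
  induction t with
  | zero => simp
  | succ t ih =>
    intro k hk
    have : k + (t + 1) * p = (k + t * p) + p := by ring
    rw [this, pow_step m hip _ (le_trans hk (Nat.le_add_right _ _)), ih k hk]

lemma chainProd_succ (X : ℕ → M) (k : ℕ) :
    chainProd X (k + 1) = chainProd X k * X (k + 1) := by
  simp [chainProd, List.range_succ]

lemma chainProd_xy (x y : M) (k : ℕ) :
    chainProd (fun k => if k = 1 then x else if k = 2 then y else 1) (k + 2) = x * y := by
  induction k with
  | zero => simp [chainProd, List.range_succ]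
  | succ k ih => rw [chainProd_succ, ih]; simp

end Aux

/-- A finite monoid satisfying `u_n = v_n` satisfies
`(xy)^ω·(yx)^ω·(xy)^ω = (xy)^ω`. -/
theorem un_eq_vn_implies_DA_identity (n : ℕ) (hn : 1 ≤ n) (M : Type) [Monoid M] [Fintype M]
    (h : ∀ X : ℕ → M, uTerm X n = vTerm X n) :
    ∀ x y : M,
      omegaPow (x * y) * omegaPow (y * x) * omegaPow (x * y) = omegaPow (x * y) := by
  intro x y
  set X : ℕ → M := fun k => if k = 1 then x else if k = 2 then y else 1 with hX
  set e := omegaPow (x * y) with he'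
  set f := omegaPow (y * x) with hf'
  have he : e * e = e := omegaPow_idem _
  have hchain : ∀ k, chainProd X (k + 2) = x * y := chainProd_xy x y
  have hrec : ∀ m : ℕ, (omegaPow (chainProd X (2 * (m + 1) + 1)) = e ∧
      omegaPow (X (2 * (m + 1) + 2) * chainProd X (2 * (m + 1))) = e) := by
    intro m
    constructor
    · have : 2 * (m + 1) + 1 = (2 * m + 1) + 2 := by ring
      rw [this, hchain]
    · have hx1 : X (2 * (m + 1) + 2) = 1 := by simp [hX]
      have : 2 * (m + 1) = 2 * m + 2 := by ring
      rw [hx1, this, hchain, one_mul]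
  have hu1 : X 1 * X 2 = x * y := by simp [hX]
  have hv1 : X 2 * X 1 = y * x := by simp [hX]
  have hu : ∀ m, 1 ≤ m → uTerm X m = e := by
    intro m hm
    induction m with
    | zero => omega
    | succ m ih =>
      match m, ih with
      | 0, _ => simp [uTerm, hu1, he']
      | m + 1, ih =>
        have ihm := ih (by omega)
        show omegaPow (chainProd X (2 * (m + 1) + 1)) * uTerm X (m + 1) *
            omegaPow (X (2 * (m + 1) + 2) * chainProd X (2 * (m + 1))) = e
        rw [(hrec m).1, (hrec m).2, ihm, he, he]
  have hv : ∀ m, 2 ≤ m → vTerm X m = e * f * e := by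
    intro m hm
    induction m with
    | zero => omega
    | succ m ih =>
      match m, ih with
      | 0, _ => omega
      | 1, _ =>
        show omegaPow (chainProd X (2 * (0 + 1) + 1)) * vTerm X (0 + 1) *
            omegaPow (X (2 * (0 + 1) + 2) * chainProd X (2 * (0 + 1))) = e * f * e
        rw [(hrec 0).1, (hrec 0).2]
        simp [vTerm, hv1, hf']
      | m + 2, ih =>
        have ihm := ih (by omega)
        show omegaPow (chainProd X (2 * (m + 1 + 1) + 1)) * vTerm X (m + 1 + 1) *
            omegaPow (X (2 * (m + 1 + 1) + 2) * chainProd X (2 * (m + 1 + 1))) = e * f * e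
        rw [(hrec (m + 1)).1, (hrec (m + 1)).2]
        rw [show vTerm X (m + 1 + 1) = e * f * e from ihm]
        calc e * (e * f * e) * e = (e * e) * f * (e * e) := by simp [mul_assoc]
          _ = e * f * e := by rw [he]
  have key := h X
  match n, hn with
  | 1, _ =>
    -- u₁ = v₁ gives e = f
    have : e = f := by simpa [uTerm, vTerm, hu1, hv1] using key
    rw [← this, he, he]
  | n + 2, _ =>
    rw [hu (n + 2) (by omega), hv (n + 2) (by omega)] at key
    exact key.symm
end

section
/- Let A be a finite alphabet, z a word over A, B a subset of α(z), and m ≥ 1. Let k = |α(z)| and T = m·(k² + k)/2. If for every b ∈ B, the words z·b and z have the same subwords of length at most T (i.e., z·b ~_T z), then z can be factored as z = z₀·z₁·z₂⋯z_m where B ⊆ α(z₁) and α(z₁) = α(z₂) = ⋯ = α(z_m). -/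
namespace SuffixFact

/-- Gauss sum `1 + 2 + ⋯ + d`. -/
def gsum : ℕ → ℕ
  | 0 => 0
  | d + 1 => gsum d + (d + 1)

lemma two_gsum (d : ℕ) : 2 * gsum d = d * (d + 1) := by
  induction d with
  | zero => simp [gsum]
  | succ n ih => rw [gsum, Nat.mul_add, ih]; ring

lemma gsum_mono {d e : ℕ} (h : d ≤ e) : gsum d ≤ gsum e := by
  induction e with
  | zero => simp [Nat.le_zero.mp h]
  | succ n ih =>
    rcases Nat.lt_or_ge d (n + 1) with h' | h'
    · exact le_trans (ih (by omega)) (by rw [gsum]; omega)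
    · have : d = n + 1 := by omega
      simp [this]

lemma le_gsum (d : ℕ) : d ≤ gsum d := by
  induction d with
  | zero => simp
  | succ n ih => rw [gsum]; omega

variable {A : Type} [DecidableEq A]

/-- The minimal suffix of `w` whose alphabet contains `D` (assuming `D ⊆ α(w)`). -/
def msuf (D : Finset A) : List A → List A
  | [] => []
  | a :: w => if D ⊆ w.toFinset then msuf D w else a :: w

lemma msuf_suffix (D : Finset A) : ∀ w : List A, msuf D w <:+ w
  | [] => ⟨[], rfl⟩
  | a :: w => by
    rw [msuf]
    split
    · exact (msuf_suffix D w).trans (List.suffix_cons a w)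
    · exact List.suffix_refl _

lemma msuf_subset (D : Finset A) : ∀ w : List A, D ⊆ w.toFinset → D ⊆ (msuf D w).toFinset
  | [] => fun h => by simpa [msuf] using h
  | a :: w => by
    intro h
    rw [msuf]
    split
    · exact msuf_subset D w ‹_›
    · exact h

lemma msuf_anchor (D : Finset A) (hne : D.Nonempty) :
    ∀ w : List A, D ⊆ w.toFinset → ∃ a t, msuf D w = a :: t ∧ a ∈ D ∧ a ∉ t
  | [] => by
    intro h
    exfalso
    obtain ⟨x, hx⟩ := hne
    simpa using h hx
  | a :: w => by
    intro h
    rw [msuf]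
    split
    · exact msuf_anchor D hne w ‹_›
    · rename_i hnot
      obtain ⟨d, hdD, hdw⟩ := Finset.not_subset.mp hnot
      have hda : d = a := by
        have := h hdD
        simp only [List.toFinset_cons, Finset.mem_insert] at this
        rcases this with h' | h'
        · exact h'
        · exact absurd h' hdw
      subst hda
      exact ⟨d, w, rfl, hdD, fun hc => hdw (List.mem_toFinset.mpr hc)⟩

lemma revforce {a : A} : ∀ (r l s : List A), a ∉ r → (a :: l).Sublist (r ++ a :: s) → l.Sublist s := by
  intro r
  induction r with
  | nil =>
    intro l s _ h
    cases h with
    | cons _ h' => exact List.sublist_of_cons_sublist h'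
    | cons_cons _ h' => exact h'
  | cons b r ih =>
    intro l s hna h
    cases h with
    | cons _ h' => exact ih l s (fun hc => hna (List.mem_cons_of_mem b hc)) h'
    | cons_cons _ _ => exact absurd List.mem_cons_self hna

lemma force {a : A} {v w' t : List A} (hat : a ∉ t) (h : (v ++ [a]).Sublist (w' ++ a :: t)) :
    v.Sublist w' := by
  have h1 : (a :: v.reverse).Sublist (t.reverse ++ a :: w'.reverse) := by
    have := h.reverse
    simpa using this
  have h2 := revforce t.reverse v.reverse w'.reverse (by simpa using hat) h1
  simpa using h2.reverse

lemma claimA {a : A} {u x w' t : List A} (hax : a ∈ x) (hat : a ∉ t)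
    (h : (u ++ x).Sublist (w' ++ a :: t)) : u.Sublist w' := by
  obtain ⟨x₁, x₂, rfl⟩ := List.append_of_mem hax
  have h1 : ((u ++ x₁) ++ [a]).Sublist (u ++ (x₁ ++ a :: x₂)) := by
    have : (x₁ ++ [a]).Sublist (x₁ ++ a :: x₂) :=
      (List.sublist_append_left [a] x₂).append_left x₁
    simpa [List.append_assoc] using this.append_left u
  have h2 := force hat (h1.trans h)
  exact (List.sublist_append_left u x₁).trans h2

/-- Assembling the final factorization once we have `m` consecutive blocks with
alphabet exactly `D`, followed by junk with alphabet inside `D`. -/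
lemma assemble (z : List A) (B : Finset A) (m : ℕ) (hm : 1 ≤ m)
    (w : List A) (acc front back : List (List A)) (D : Finset A)
    (hI0 : z = w ++ acc.flatten)
    (hacc : acc = front ++ back)
    (hlen : front.length = m)
    (hfr : ∀ s ∈ front, s.toFinset = D)
    (hI6 : ∀ s ∈ acc, s.toFinset ⊆ D)
    (hIB : B ⊆ D) :
    ∃ (z₀ : List A) (zs : List (List A)) (C : Finset A),
      zs.length = m ∧ z = z₀ ++ zs.flatten ∧ B ⊆ C ∧ ∀ w ∈ zs, w.toFinset = C := by
  have hfne : front ≠ [] := by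
    intro hc; rw [hc] at hlen; simp at hlen; omega
  obtain ⟨F, g, rfl⟩ : ∃ F g, front = F ++ [g] := by
    rcases List.eq_nil_or_concat front with h' | ⟨F, g, h'⟩
    · exact absurd h' hfne
    · exact ⟨F, g, by simpa [List.concat_eq_append] using h'⟩
  refine ⟨w, F ++ [g ++ back.flatten], D, ?_, ?_, hIB, ?_⟩
  · have : F.length + 1 = m := by simpa using hlen
    simpa using this
  · rw [hI0, hacc]
    simp [List.flatten_append, List.append_assoc]
  · intro x hx
    rcases List.mem_append.mp hx with hx | hx
    · exact hfr x (List.mem_append.mpr (Or.inl hx))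
    · have hxg : x = g ++ back.flatten := by simpa using hx
      subst hxg
      have hg : g.toFinset = D := hfr g (List.mem_append.mpr (Or.inr (by simp)))
      apply Finset.Subset.antisymm
      · intro y hy
        rw [List.toFinset_append, Finset.mem_union] at hy
        rcases hy with hy | hy
        · rw [← hg]; exact hy
        · obtain ⟨t, htb, hyt⟩ := List.mem_flatten.mp (List.mem_toFinset.mp hy)
          exact hI6 t (by rw [hacc]; exact List.mem_append.mpr (Or.inr htb))
            (List.mem_toFinset.mpr hyt)
      · intro y hy
        rw [List.toFinset_append, Finset.mem_union]
        exact Or.inl (hg ▸ hy)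

/-- A list's dedup has the same `toFinset`. -/
lemma dedup_tf (l : List A) : l.dedup.toFinset = l.toFinset := by
  ext a; simp [List.mem_dedup]

/-- One step of the extraction process. -/
lemma step (z : List A) (B : Finset A) (m T : ℕ)
    (hF : ∀ v wB : List A, v.Sublist z → (∀ x ∈ wB, x ∈ B) →
      v.length + wB.length ≤ T → (v ++ wB).Sublist z)
    (hTk : m * gsum z.toFinset.card ≤ T)
    (hBz : B ⊆ z.toFinset) (hBne : B.Nonempty)
    (w : List A) (acc : List (List A)) (D : Finset A) (e P : List A) (r : ℕ)
    (hI0 : z = w ++ acc.flatten)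
    (hI1 : ∀ u : List A, (u ++ (P ++ B.toList)).Sublist z → u.Sublist w)
    (hI2n : e.Nodup) (hI2f : e.toFinset = D)
    (hI5 : (e ++ P).Sublist acc.flatten)
    (hI6 : ∀ x ∈ acc, x.toFinset ⊆ D)
    (hIB : B ⊆ D)
    (hI7 : D ⊆ z.toFinset)
    (hBI : e.length + P.length ≤ (m - 1) * gsum (D.card - 1) + r * D.card)
    (hr1 : 1 ≤ r) (hrm : r < m)
    (hfront : ∃ front back, acc = front ++ back ∧ front.length = r ∧
      ∀ x ∈ front, x.toFinset = D) :
    ∃ (w' : List A) (acc' : List (List A)) (D' : Finset A) (e' P' : List A) (r' : ℕ),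
      z = w' ++ acc'.flatten ∧
      (∀ u : List A, (u ++ (P' ++ B.toList)).Sublist z → u.Sublist w') ∧
      e'.Nodup ∧ e'.toFinset = D' ∧
      (e' ++ P').Sublist acc'.flatten ∧
      (∀ x ∈ acc', x.toFinset ⊆ D') ∧
      B ⊆ D' ∧ D' ⊆ z.toFinset ∧
      e'.length + P'.length ≤ (m - 1) * gsum (D'.card - 1) + r' * D'.card ∧
      1 ≤ r' ∧ r' ≤ m ∧
      (∃ front back, acc' = front ++ back ∧ front.length = r' ∧
        ∀ x ∈ front, x.toFinset = D') ∧
      w'.length < w.length := by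
  have hDne : D.Nonempty := Finset.Nonempty.mono hIB hBne
  obtain ⟨m', rfl⟩ : ∃ m', m = m' + 1 := ⟨m - 1, by omega⟩
  have hd1 : 1 ≤ D.card := hDne.card_pos
  have hdk : D.card ≤ z.toFinset.card := Finset.card_le_card hI7
  have hBk : B.card ≤ z.toFinset.card := Finset.card_le_card hBz
  have helen : e.length = D.card := by
    rw [← hI2f]; exact (List.toFinset_card_of_nodup hI2n).symm
  have hBI' : e.length + P.length ≤ m' * gsum (D.card - 1) + r * D.card := by
    simpa using hBI
  have hrm' : r ≤ m' := by omega
  -- the budget allows one use of the extension property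
  have hkk : gsum (z.toFinset.card - 1) + z.toFinset.card = gsum z.toFinset.card := by
    obtain ⟨k', hk'⟩ : ∃ k', z.toFinset.card = k' + 1 := ⟨z.toFinset.card - 1, by omega⟩
    rw [hk']; simp [gsum]
  have hbud : (e ++ P).length + B.toList.length ≤ T := by
    have h1 : m' * gsum (D.card - 1) ≤ m' * gsum (z.toFinset.card - 1) :=
      Nat.mul_le_mul_left _ (gsum_mono (by omega))
    have h2 : r * D.card ≤ m' * z.toFinset.card := Nat.mul_le_mul hrm' hdk
    have h3 : B.toList.length ≤ gsum z.toFinset.card := by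
      rw [Finset.length_toList]
      exact le_trans hBk (le_gsum _)
    have h4 : m' * gsum (z.toFinset.card - 1) + m' * z.toFinset.card
        = m' * gsum z.toFinset.card := by rw [← Nat.mul_add, hkk]
    have h5 : m' * gsum z.toFinset.card + gsum z.toFinset.card
        = (m' + 1) * gsum z.toFinset.card := by ring
    rw [List.length_append]
    have h6 : e.length + P.length + B.toList.length ≤ (m' + 1) * gsum z.toFinset.card := by
      linarith
    exact le_trans h6 hTk
  -- the next minimal suffix exists
  have h5z : (e ++ P).Sublist z :=
    hI5.trans (by rw [hI0]; exact List.sublist_append_right w acc.flatten)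
  have h6z : ((e ++ P) ++ B.toList).Sublist z :=
    hF (e ++ P) B.toList h5z (fun x hx => Finset.mem_toList.mp hx) hbud
  have hew : e.Sublist w := hI1 e (by simpa [List.append_assoc] using h6z)
  have hDw : D ⊆ w.toFinset := by
    intro x hx
    rw [← hI2f] at hx
    exact List.mem_toFinset.mpr (hew.subset (List.mem_toFinset.mp hx))
  obtain ⟨a, t, hst, haD, hat⟩ := msuf_anchor D hDne w hDw
  obtain ⟨w', hw'⟩ := msuf_suffix D w
  have hwdec : w = w' ++ a :: t := by rw [← hw', hst]
  have hlenlt : w'.length < w.length := by rw [hwdec]; simp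
  have hDD' : D ⊆ (msuf D w).toFinset := msuf_subset D w hDw
  have hsw : (msuf D w).Sublist w := (msuf_suffix D w).sublist
  have hD'z : (msuf D w).toFinset ⊆ z.toFinset := by
    intro x hx
    have hxw : x ∈ w := hsw.subset (List.mem_toFinset.mp hx)
    have hxz : x ∈ z := by rw [hI0]; exact List.mem_append.mpr (Or.inl hxw)
    exact List.mem_toFinset.mpr hxz
  have hI0' : z = w' ++ ((msuf D w) :: acc).flatten := by
    rw [hI0, List.flatten_cons, ← List.append_assoc, hw']
  have hI1' : ∀ u : List A, (u ++ ((e ++ P) ++ B.toList)).Sublist z → u.Sublist w' := by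
    intro u hu
    have h1 : (u ++ e).Sublist w := hI1 (u ++ e) (by simpa [List.append_assoc] using hu)
    rw [hwdec] at h1
    have hae : a ∈ e := by rw [← List.mem_toFinset, hI2f]; exact haD
    exact claimA hae hat h1
  have hI5' : ((msuf D w).dedup ++ (e ++ P)).Sublist ((msuf D w) :: acc).flatten := by
    rw [List.flatten_cons]
    exact (List.dedup_sublist _).append hI5
  have hI6' : ∀ x ∈ (msuf D w) :: acc, x.toFinset ⊆ (msuf D w).toFinset := by
    intro x hx
    rcases List.mem_cons.mp hx with rfl | hx
    · exact Finset.Subset.refl _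
    · exact (hI6 x hx).trans hDD'
  have hIB' : B ⊆ (msuf D w).toFinset := hIB.trans hDD'
  have helen' : (msuf D w).dedup.length = (msuf D w).toFinset.card :=
    (List.card_toFinset _).symm
  obtain ⟨front, back, hfb, hfl, hfa⟩ := hfront
  by_cases hEq : (msuf D w).toFinset = D
  · -- the alphabet did not grow: extend the current run
    refine ⟨w', (msuf D w) :: acc, D, (msuf D w).dedup, e ++ P, r + 1,
      hI0', hI1', List.nodup_dedup _, by rw [dedup_tf, hEq], hI5',
      fun x hx => by rw [← hEq]; exact hI6' x hx, hIB, hI7, ?_, by omega, by omega, ?_, hlenlt⟩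
    · have hc : (msuf D w).dedup.length = D.card := by rw [helen', hEq]
      have hx1 : (r + 1) * D.card = r * D.card + D.card := by ring
      simp only [List.length_append]
      have : (m' + 1 - 1) * gsum (D.card - 1) = m' * gsum (D.card - 1) := by simp
      rw [this, hx1, hc]
      linarith
    · refine ⟨(msuf D w) :: front, back, by rw [hfb]; simp, by simp [hfl], ?_⟩
      intro x hx
      rcases List.mem_cons.mp hx with rfl | hx
      · exact hEq
      · exact hfa x hx
  · -- the alphabet grew: start a new run
    have hcard : D.card < (msuf D w).toFinset.card :=
      Finset.card_lt_card (ssubset_of_subset_of_ne hDD' (Ne.symm hEq))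
    refine ⟨w', (msuf D w) :: acc, (msuf D w).toFinset, (msuf D w).dedup, e ++ P, 1,
      hI0', hI1', List.nodup_dedup _, dedup_tf _, hI5', hI6', hIB', hD'z, ?_,
      le_refl 1, by omega, ⟨[msuf D w], acc, by simp, by simp, by simp⟩, hlenlt⟩
    have hgd : gsum (D.card - 1) + D.card = gsum D.card := by
      obtain ⟨d', hd'⟩ : ∃ d', D.card = d' + 1 := ⟨D.card - 1, by omega⟩
      rw [hd']; simp [gsum]
    have h1 : m' * gsum (D.card - 1) + r * D.card ≤ m' * gsum ((msuf D w).toFinset.card - 1) := by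
      have h2 : r * D.card ≤ m' * D.card := Nat.mul_le_mul_right _ hrm'
      have h3 : m' * gsum (D.card - 1) + m' * D.card = m' * gsum D.card := by
        rw [← Nat.mul_add, hgd]
      have h4 : m' * gsum D.card ≤ m' * gsum ((msuf D w).toFinset.card - 1) :=
        Nat.mul_le_mul_left _ (gsum_mono (by omega))
      linarith
    simp only [List.length_append]
    have hsimp : (m' + 1 - 1) * gsum ((msuf D w).toFinset.card - 1)
        = m' * gsum ((msuf D w).toFinset.card - 1) := by simp
    rw [hsimp, helen']
    have : 1 * (msuf D w).toFinset.card = (msuf D w).toFinset.card := one_mul _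
    linarith


/-- The main induction: run the extraction process until a run of `m` equal
alphabets appears. -/
lemma main (z : List A) (B : Finset A) (m T : ℕ)
    (hF : ∀ v wB : List A, v.Sublist z → (∀ x ∈ wB, x ∈ B) →
      v.length + wB.length ≤ T → (v ++ wB).Sublist z)
    (hTk : m * gsum z.toFinset.card ≤ T)
    (hBz : B ⊆ z.toFinset) (hBne : B.Nonempty) (hm : 1 ≤ m) :
    ∀ (n : ℕ) (w : List A) (acc : List (List A)) (D : Finset A) (e P : List A) (r : ℕ),
      w.length ≤ n →
      z = w ++ acc.flatten →
      (∀ u : List A, (u ++ (P ++ B.toList)).Sublist z → u.Sublist w) →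
      e.Nodup → e.toFinset = D →
      (e ++ P).Sublist acc.flatten →
      (∀ x ∈ acc, x.toFinset ⊆ D) →
      B ⊆ D →
      D ⊆ z.toFinset →
      e.length + P.length ≤ (m - 1) * gsum (D.card - 1) + r * D.card →
      1 ≤ r → r ≤ m →
      (∃ front back, acc = front ++ back ∧ front.length = r ∧
        ∀ x ∈ front, x.toFinset = D) →
      ∃ (z₀ : List A) (zs : List (List A)) (C : Finset A),
        zs.length = m ∧ z = z₀ ++ zs.flatten ∧ B ⊆ C ∧ ∀ w ∈ zs, w.toFinset = C := by
  intro n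
  induction n with
  | zero =>
    intro w acc D e P r hn hI0 hI1 hI2n hI2f hI5 hI6 hIB hI7 hBI hr1 hrm hfront
    by_cases hrm' : r = m
    · obtain ⟨front, back, h1, h2, h3⟩ := hfront
      exact assemble z B m hm w acc front back D hI0 h1 (by omega) h3 hI6 hIB
    · obtain ⟨w', acc', D', e', P', r', _, _, _, _, _, _, _, _, _, _, _, _, hlt⟩ :=
        step z B m T hF hTk hBz hBne w acc D e P r hI0 hI1 hI2n hI2f hI5 hI6 hIB hI7 hBI
          hr1 (by omega) hfront
      omega
  | succ n ih =>
    intro w acc D e P r hn hI0 hI1 hI2n hI2f hI5 hI6 hIB hI7 hBI hr1 hrm hfront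
    by_cases hrm' : r = m
    · obtain ⟨front, back, h1, h2, h3⟩ := hfront
      exact assemble z B m hm w acc front back D hI0 h1 (by omega) h3 hI6 hIB
    · obtain ⟨w', acc', D', e', P', r', hI0', hI1', hI2n', hI2f', hI5', hI6', hIB', hI7',
        hBI', hr1', hrm'', hfront', hlt⟩ :=
        step z B m T hF hTk hBz hBne w acc D e P r hI0 hI1 hI2n hI2f hI5 hI6 hIB hI7 hBI
          hr1 (by omega) hfront
      exact ih w' acc' D' e' P' r' (by omega) hI0' hI1' hI2n' hI2f' hI5' hI6' hIB' hI7'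
        hBI' hr1' hrm'' hfront'

end SuffixFact

/-- If `B ⊆ α(z)`, `k = |α(z)|`, `T = m·(k² + k)/2` and `z·b ~_T z` for every
`b ∈ B`, then `z` factors as `z₀·z₁⋯z_m` with `B ⊆ α(z₁)` and
`α(z₁) = α(z₂) = ⋯ = α(z_m)`. -/
theorem suffix_factorization (A : Type) [Fintype A] [DecidableEq A] (z : List A)
    (B : Finset A) (hB : B ⊆ z.toFinset) (m : ℕ) (hm : 1 ≤ m)
    (h : ∀ b ∈ B,
      SameSubwords (m * (z.toFinset.card ^ 2 + z.toFinset.card) / 2) (z ++ [b]) z) :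
    ∃ (z₀ : List A) (zs : List (List A)) (C : Finset A),
      zs.length = m ∧ z = z₀ ++ zs.flatten ∧ B ⊆ C ∧ ∀ w ∈ zs, w.toFinset = C := by
  classical
  rcases B.eq_empty_or_nonempty with rfl | hBne
  · have hrep : ∀ n : ℕ, (List.replicate n ([] : List A)).flatten = [] := by
      intro n
      induction n with
      | zero => simp
      | succ n ih => simp [ih]
    refine ⟨z, List.replicate m [], ∅, by simp, by simp [hrep], Finset.Subset.refl _, ?_⟩
    intro w hw
    rw [List.eq_of_mem_replicate hw]
    simp
  · set T := m * (z.toFinset.card ^ 2 + z.toFinset.card) / 2 with hTdef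
    have hTk : m * SuffixFact.gsum z.toFinset.card ≤ T := by
      have h2g := SuffixFact.two_gsum z.toFinset.card
      have h1 : z.toFinset.card ^ 2 + z.toFinset.card
          = 2 * SuffixFact.gsum z.toFinset.card := by
        rw [h2g]; ring
      rw [hTdef, h1, show m * (2 * SuffixFact.gsum z.toFinset.card)
          = 2 * (m * SuffixFact.gsum z.toFinset.card) by ring,
        Nat.mul_div_cancel_left _ (by norm_num : 0 < 2)]
    have hF : ∀ v wB : List A, v.Sublist z → (∀ x ∈ wB, x ∈ B) →
        v.length + wB.length ≤ T → (v ++ wB).Sublist z := by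
      intro v wB
      induction wB using List.reverseRecOn with
      | nil => intro hv _ _; simpa using hv
      | append_singleton l b ih =>
        intro hv hmem hlen
        have hb : b ∈ B := hmem b (by simp)
        have h1 : (v ++ l).Sublist z := by
          refine ih hv (fun x hx => hmem x (by simp [hx])) ?_
          simp only [List.length_append] at hlen ⊢
          omega
        have h2 : ((v ++ l) ++ [b]).Sublist (z ++ [b]) := h1.append (List.Sublist.refl [b])
        have h3 := (h b hb ((v ++ l) ++ [b]) (by
          simp only [List.length_append, List.length_cons, List.length_nil] at hlen ⊢
          omega)).mp h2
        simpa [List.append_assoc] using h3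
    obtain ⟨a, t, hst, haB, hat⟩ := SuffixFact.msuf_anchor B hBne z hB
    obtain ⟨w₁, hw₁⟩ := SuffixFact.msuf_suffix B z
    refine SuffixFact.main z B m T hF hTk hB hBne hm z.length w₁ [SuffixFact.msuf B z]
      (SuffixFact.msuf B z).toFinset (SuffixFact.msuf B z).dedup [] 1 ?_ ?_ ?_ ?_ ?_ ?_ ?_ ?_ ?_ ?_ ?_ hm ?_
    · have := congrArg List.length hw₁
      simp only [List.length_append] at this
      omega
    · simp only [List.flatten_cons, List.flatten_nil, List.append_nil]
      exact hw₁.symm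
    · intro u hu
      simp only [List.nil_append] at hu
      have hu' : (u ++ B.toList).Sublist (w₁ ++ a :: t) := by
        rw [← hst, hw₁]; exact hu
      exact SuffixFact.claimA (Finset.mem_toList.mpr haB) hat hu'
    · exact List.nodup_dedup _
    · exact SuffixFact.dedup_tf _
    · simp [List.dedup_sublist]
    · intro x hx
      rcases List.mem_cons.mp hx with rfl | hx
      · exact Finset.Subset.refl _
      · simp at hx
    · exact SuffixFact.msuf_subset B z hB
    · intro x hx
      have hxz : x ∈ z := ((SuffixFact.msuf_suffix B z).sublist).subset (List.mem_toFinset.mp hx)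
      exact List.mem_toFinset.mpr hxz
    · have hc : (SuffixFact.msuf B z).dedup.length = (SuffixFact.msuf B z).toFinset.card :=
        (List.card_toFinset _).symm
      have h1 : 1 * (SuffixFact.msuf B z).toFinset.card
          = (SuffixFact.msuf B z).toFinset.card := one_mul _
      simp only [List.length_nil, Nat.add_zero]
      rw [hc, h1]
      exact Nat.le_add_left _ _
    · exact le_refl 1
    · exact ⟨[SuffixFact.msuf B z], [], by simp, by simp, by simp⟩
end

section
/- Let z be a word over a finite alphabet with α(z) = B = {b₁, …, b_r} (r ≥ 1 distinct letters), and let m ≥ 1. If for every b ∈ B the words z·b and z have the same subwords of length at most m·r (i.e., z·b ~_{m·r} z), then the word (b₁b₂⋯b_r)^m is a subword of z. -/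
/-- If `α(z) = {b₁, …, b_r}` (distinct letters, `r ≥ 1`) and `z·b ~_{m·r} z` for
every `b ∈ α(z)`, then `(b₁b₂⋯b_r)^m` is a subword of `z`. -/
theorem base_case_subword (A : Type) [Fintype A] [DecidableEq A] (z : List A)
    (bs : List A) (hnd : bs.Nodup) (hr : 1 ≤ bs.length) (hα : z.toFinset = bs.toFinset)
    (m : ℕ) (hm : 1 ≤ m)
    (h : ∀ b ∈ bs, SameSubwords (m * bs.length) (z ++ [b]) z) :
    (List.replicate m bs).flatten.Sublist z := by
  have key : ∀ v : List A, (∀ a ∈ v, a ∈ bs) → v.length ≤ m * bs.length → v.Sublist z := by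
    intro v
    induction v using List.reverseRecOn with
    | nil => intro _ _; exact List.nil_sublist z
    | append_singleton v b ih =>
      intro hmem hlen
      have hb : b ∈ bs := hmem b (by simp)
      have hv : v.Sublist z := by
        apply ih (fun a ha => hmem a (by simp [ha]))
        have := hlen
        simp at this
        omega
      have h1 : (v ++ [b]).Sublist (z ++ [b]) := hv.append (List.Sublist.refl _)
      exact (h b hb (v ++ [b]) hlen).mp h1
  apply key
  · intro a ha
    simp only [List.mem_flatten] at ha
    obtain ⟨l, hl, hal⟩ := ha
    rw [List.eq_of_mem_replicate hl] at hal
    exact hal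
  · rw [List.length_flatten]
    simp [List.map_replicate, List.sum_replicate, smul_eq_mul]
end
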